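/- arXiv:1008.1501 — 4 statements merged into one kernel-verified Lean document; each statement's English description precedes it below -/
import Mathlib

section
/- For fixed m, the proportion of voting situations with n agents on A having more than one Tideman winner tends to 0 as n → ∞, and likewise the proportion of voting situations with n agents having more than one Dodgson winner tends to 0 as n → ∞. -/
/-!
Fix `x ≠ y` and two votes `v₀ ≠ v₁`. Replacing every copy of `v₁` by `v₀` sends the voting
situations with `n` agents to the `C(n + m! - 2, n)` situations avoiding `v₁`, a fraction
`(m! - 1) / (n + m! - 1) → 0` of all of them. The map is injective on the situations where the
scores of `x` and `y` tie as soon as, on every line `t • v₁ + R ↦ t • v₀ + R` with `t ≥ 1`, the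
scores do not tie at both ends.

For Tideman take `v₀` with `x` directly above `y` and `v₁` with the two swapped: no other
comparison changes, so `Sc_T(x) - Sc_T(y) = n_{yx} - n_{xy} + const` drops by `2t`.

For Dodgson take `v₀` with `x` on top and `v₁` with `x` moved to the bottom. The Dodgson score of
`a` is the least total number of positions by which `a` must be raised in the votes to become a
Condorcet-tie winner (each position being one adjacent swap). In these terms, passing from
`t • v₁ + R` to `t • v₀ + R` strictly lowers the score of `x` unless it is `0`, and does not lower
the score of `y`; when both scores are `0` at `t • v₁ + R`, `x` strictly beats `y` at the other end.
-/

open Finset Filter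

/-- A vote (strict linear order) on `m` alternatives, encoded by its position map:
`v x` is the position of alternative `x`, position `0` being the top.
`v` ranks `x` above `y` iff `v x < v y`. -/
abbrev Vote (m : ℕ) := Equiv.Perm (Fin m)

/-- A profile is a list of `n` votes, one per agent. -/
abbrev Profile (m n : ℕ) := Fin n → Vote m

/-- `n_{xy}[P]`: the number of votes in `P` ranking `x` above `y`. -/
def nAbove {m n : ℕ} (P : Profile m n) (x y : Fin m) : ℕ :=
  (Finset.univ.filter (fun i => P i x < P i y)).card

/-- `adv[P](x,y) = max (0, n_{xy} - n_{yx})` (truncated subtraction on `ℕ`). -/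
def adv {m n : ℕ} (P : Profile m n) (x y : Fin m) : ℕ :=
  nAbove P x y - nAbove P y x

/-- The Tideman score `Sc_T[P](a) = Σ_{b ≠ a} adv[P](b,a)`. -/
def ScT {m n : ℕ} (P : Profile m n) (a : Fin m) : ℕ :=
  ∑ b ∈ Finset.univ.filter (fun b => b ≠ a), adv P b a

/-- The Dodgson Quick score `Sc_Q[P](a) = Σ_{b ≠ a} ⌈adv[P](b,a)/2⌉`. -/
def ScQ {m n : ℕ} (P : Profile m n) (a : Fin m) : ℕ :=
  ∑ b ∈ Finset.univ.filter (fun b => b ≠ a), (adv P b a + 1) / 2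

/-- `a` is a Condorcet-tie winner of `P` iff `adv[P](b,a) = 0` for all `b ≠ a`. -/
def CondorcetTieWinner {m n : ℕ} (P : Profile m n) (a : Fin m) : Prop :=
  ∀ b, b ≠ a → adv P b a = 0

/-- `a` is a Condorcet winner of `P` iff `adv[P](a,b) > 0` for all `b ≠ a`. -/
def CondorcetWinner {m n : ℕ} (P : Profile m n) (a : Fin m) : Prop :=
  ∀ b, b ≠ a → 0 < adv P a b

/-- `w` is obtained from the vote `v` by one swap of neighbouring alternatives
(the alternatives at consecutive positions `p` and `p+1` are exchanged). -/
def AdjSwapVote {m : ℕ} (v w : Vote m) : Prop :=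
  ∃ p q : Fin m, (q : ℕ) = (p : ℕ) + 1 ∧ w = v.trans (Equiv.swap p q)

/-- `Q` is obtained from the profile `P` by one adjacent swap in one vote. -/
def AdjSwap {m n : ℕ} (P Q : Profile m n) : Prop :=
  ∃ i : Fin n, AdjSwapVote (P i) (Q i) ∧ ∀ j, j ≠ i → Q j = P j

/-- `Reach r k P Q`: `Q` can be obtained from `P` by exactly `k` steps of `r`. -/
def Reach {α : Type*} (r : α → α → Prop) : ℕ → α → α → Prop
  | 0, P, Q => P = Q
  | (k+1), P, Q => ∃ R, r P R ∧ Reach r k R Q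

/-- The Dodgson score `Sc_D[P](a)`: the minimum number of adjacent swaps needed to
transform `P` into a profile in which `a` is a Condorcet-tie winner. -/
noncomputable def ScD {m n : ℕ} (P : Profile m n) (a : Fin m) : ℕ :=
  sInf {k | ∃ Q, Reach AdjSwap k P Q ∧ CondorcetTieWinner Q a}

/-- Variant of the Dodgson score requiring `a` to become a Condorcet winner. -/
noncomputable def ScD' {m n : ℕ} (P : Profile m n) (a : Fin m) : ℕ :=
  sInf {k | ∃ Q, Reach AdjSwap k P Q ∧ CondorcetWinner Q a}

/- Voting situations: multisets of votes.  Scores depend only on the voting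
situation of a profile, so we define them directly on multisets. -/

/-- Number of votes in the voting situation `S` ranking `x` above `y`. -/
def snAbove {m : ℕ} (S : Multiset (Vote m)) (x y : Fin m) : ℕ :=
  (S.filter (fun v => v x < v y)).card

def sadv {m : ℕ} (S : Multiset (Vote m)) (x y : Fin m) : ℕ :=
  snAbove S x y - snAbove S y x

/-- Tideman score of a voting situation. -/
def sScT {m : ℕ} (S : Multiset (Vote m)) (a : Fin m) : ℕ :=
  ∑ b ∈ Finset.univ.filter (fun b => b ≠ a), sadv S b a

/-- Dodgson Quick score of a voting situation. -/
def sScQ {m : ℕ} (S : Multiset (Vote m)) (a : Fin m) : ℕ :=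
  ∑ b ∈ Finset.univ.filter (fun b => b ≠ a), (sadv S b a + 1) / 2

def sCondorcetTieWinner {m : ℕ} (S : Multiset (Vote m)) (a : Fin m) : Prop :=
  ∀ b, b ≠ a → sadv S b a = 0

/-- One adjacent swap applied to one vote of a voting situation. -/
def sAdjSwap {m : ℕ} (S T : Multiset (Vote m)) : Prop :=
  ∃ v ∈ S, ∃ w, AdjSwapVote v w ∧ T = w ::ₘ S.erase v

/-- Dodgson score of a voting situation. -/
noncomputable def sScD {m : ℕ} (S : Multiset (Vote m)) (a : Fin m) : ℕ :=
  sInf {k | ∃ T, Reach sAdjSwap k S T ∧ sCondorcetTieWinner T a}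

/-- `a` is a Tideman winner (minimal Tideman score). -/
def sTWinner {m : ℕ} (S : Multiset (Vote m)) (a : Fin m) : Prop :=
  ∀ b, sScT S a ≤ sScT S b

/-- `a` is a DQ winner (minimal DQ score). -/
def sQWinner {m : ℕ} (S : Multiset (Vote m)) (a : Fin m) : Prop :=
  ∀ b, sScQ S a ≤ sScQ S b

/-- `a` is a Dodgson winner (minimal Dodgson score). -/
def sDWinner {m : ℕ} (S : Multiset (Vote m)) (a : Fin m) : Prop :=
  ∀ b, sScD S a ≤ sScD S b


section Votes

variable {m : ℕ}

lemma val_trans_swap (v : Vote m) (p q z : Fin m) :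
    ((v.trans (Equiv.swap p q) z : Fin m) : ℕ) =
      if (v z : ℕ) = p then q else if (v z : ℕ) = q then p else v z := by
  simp only [Equiv.trans_apply, Equiv.swap_apply_def, Fin.ext_iff]

@[simp] lemma snAbove_cons (v : Vote m) (S : Multiset (Vote m)) (x y : Fin m) :
    snAbove (v ::ₘ S) x y = snAbove S x y + if v x < v y then 1 else 0 := by
  by_cases h : v x < v y <;> simp [snAbove, h, add_comm]

lemma snAbove_replicate_add (t : ℕ) (v : Vote m) (R : Multiset (Vote m)) (x y : Fin m) :
    snAbove (Multiset.replicate t v + R) x y = snAbove R x y + if v x < v y then t else 0 := by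
  induction t with
  | zero => simp
  | succ t ih => split_ifs at ih ⊢ <;> simp [Multiset.replicate_succ, *]; omega

lemma sCondorcetTieWinner_iff {S : Multiset (Vote m)} {a : Fin m} :
    sCondorcetTieWinner S a ↔ ∀ b ≠ a, snAbove S b a ≤ snAbove S a b := by
  simp only [sCondorcetTieWinner, sadv, Nat.sub_eq_zero_iff_le]

end Votes

section Counting

variable {α : Type*} [DecidableEq α]

lemma Multiset.map_update_id_eq (v₀ v₁ : α) (M : Multiset α) :
    M.map (Function.update id v₁ v₀) =
      Multiset.replicate (M.count v₁) v₀ + M.filter (· ≠ v₁) := by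
  conv_lhs => rw [← M.filter_add_not (· = v₁), Multiset.filter_eq']
  rw [Multiset.map_add, Multiset.map_replicate, Function.update_self]
  congr 1
  refine (Multiset.map_congr rfl fun v hv => ?_).trans (Multiset.map_id _)
  have hv₁ : v ≠ v₁ := (Multiset.mem_filter.mp hv).2
  exact Function.update_of_ne hv₁ _ _

lemma Multiset.exists_eq_replicate_add_of_map_update_eq {v₀ v₁ : α} {M M' : Multiset α}
    (h : M.map (Function.update id v₁ v₀) = M'.map (Function.update id v₁ v₀))
    (hc : M.count v₁ ≤ M'.count v₁) :
    ∃ t R, M = Multiset.replicate t v₀ + R ∧ M' = Multiset.replicate t v₁ + R := by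
  obtain ⟨t, ht⟩ := Nat.exists_eq_add_of_le hc
  rw [Multiset.map_update_id_eq, Multiset.map_update_id_eq, ht, Multiset.replicate_add,
    add_assoc] at h
  refine ⟨t, Multiset.replicate (M.count v₁) v₁ + M'.filter (· ≠ v₁), ?_, ?_⟩
  · conv_lhs => rw [← M.filter_add_not (· = v₁), Multiset.filter_eq', add_left_cancel h]
    abel
  · conv_lhs => rw [← M'.filter_add_not (· = v₁), Multiset.filter_eq', ht, Multiset.replicate_add]
    abel

lemma Multiset.eq_of_map_update_eq {v₀ v₁ : α} {Bad : Multiset α → Prop}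
    (hsep : ∀ t ≠ 0, ∀ R, Bad (Multiset.replicate t v₁ + R) → ¬ Bad (Multiset.replicate t v₀ + R))
    {M M' : Multiset α} (hM : Bad M) (hM' : Bad M')
    (h : M.map (Function.update id v₁ v₀) = M'.map (Function.update id v₁ v₀)) : M = M' := by
  wlog hc : M.count v₁ ≤ M'.count v₁ generalizing M M'
  · exact (this hM' hM h.symm (le_of_not_ge hc)).symm
  obtain ⟨t, R, rfl, rfl⟩ := Multiset.exists_eq_replicate_add_of_map_update_eq h hc
  obtain rfl | ht := eq_or_ne t 0
  · simp
  · exact absurd hM (hsep t ht R hM')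

/-- Replacing every `v₁` by `v₀` is injective on `Bad` situations, with values in situations
avoiding `v₁`. -/
theorem ncard_le_multichoose_of_separates [Fintype α] {v₀ v₁ : α} (hne : v₀ ≠ v₁)
    {Bad : Multiset α → Prop}
    (hsep : ∀ t ≠ 0, ∀ R, Bad (Multiset.replicate t v₁ + R) → ¬ Bad (Multiset.replicate t v₀ + R))
    (n : ℕ) : {S : Sym α n | Bad S}.ncard ≤ Nat.multichoose (Fintype.card α - 1) n := by
  let g : α → {a // a ≠ v₁} := fun a => if h : a = v₁ then ⟨v₀, hne⟩ else ⟨a, h⟩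
  have hg : Subtype.val ∘ g = Function.update id v₁ v₀ := by
    funext a
    by_cases h : a = v₁ <;> simp [g, h]
  calc {S : Sym α n | Bad S}.ncard
      ≤ (Set.univ : Set (Sym {a // a ≠ v₁} n)).ncard := by
        refine Set.ncard_le_ncard_of_injOn (Sym.map g) (fun _ _ => trivial) ?_ Set.finite_univ
        intro S hS S' hS' h
        apply Sym.coe_injective
        refine Multiset.eq_of_map_update_eq hsep hS hS' ?_
        have := congrArg
          (fun T : Sym {a // a ≠ v₁} n => (T : Multiset {a // a ≠ v₁}).map Subtype.val) h
        simp only [Sym.coe_map, Multiset.map_map] at this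
        rwa [← hg]
    _ = Nat.multichoose (Fintype.card α - 1) n := by
        simp [Set.ncard_univ, Sym.card_sym_eq_multichoose, Fintype.card_subtype_compl]

end Counting

section Asymptotics

lemma multichoose_pred_mul {d : ℕ} (hd : 2 ≤ d) (n : ℕ) :
    Nat.multichoose (d - 1) n * (n + d - 1) = (n + d - 1).choose n * (d - 1) := by
  have h := Nat.choose_mul_succ_eq (n + d - 2) n
  rw [show n + d - 2 + 1 = n + d - 1 by omega, show n + d - 1 - n = d - 1 by omega] at h
  rwa [Nat.multichoose_eq, show d - 1 + n - 1 = n + d - 2 by omega]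

theorem tendsto_div_choose_of_le_multichoose {d : ℕ} (hd : 2 ≤ d) (C : ℕ) {f : ℕ → ℕ}
    (hf : ∀ n, f n ≤ C * Nat.multichoose (d - 1) n) :
    Tendsto (fun n => (f n : ℝ) / (n + d - 1).choose n) atTop (nhds 0) := by
  refine squeeze_zero (fun n => by positivity)
    (g := fun n => ((C * (d - 1) : ℕ) : ℝ) / (n + d - 1 : ℕ)) (fun n => ?_) ?_
  · have hchoose : 0 < (n + d - 1).choose n := Nat.choose_pos (by omega)
    rw [div_le_div_iff₀ (by exact_mod_cast hchoose) (by exact_mod_cast (by omega : 0 < n + d - 1))]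
    exact_mod_cast calc f n * (n + d - 1)
        ≤ C * Nat.multichoose (d - 1) n * (n + d - 1) := Nat.mul_le_mul_right _ (hf n)
      _ = C * (d - 1) * (n + d - 1).choose n := by rw [mul_assoc, multichoose_pred_mul hd]; ring
  · exact (tendsto_const_div_atTop_nhds_zero_nat _).comp
      (tendsto_atTop_mono (fun n => show n ≤ n + d - 1 by omega) tendsto_id)

end Asymptotics

section Ties

variable {m : ℕ}

def SeparatesTies (Sc : Multiset (Vote m) → Fin m → ℕ) (x y : Fin m) (v₀ v₁ : Vote m) : Prop :=
  ∀ t ≠ 0, ∀ R, Sc (Multiset.replicate t v₁ + R) x = Sc (Multiset.replicate t v₁ + R) y →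
    Sc (Multiset.replicate t v₀ + R) x ≠ Sc (Multiset.replicate t v₀ + R) y

theorem ncard_two_minimizers_le (Sc : Multiset (Vote m) → Fin m → ℕ)
    (hsep : ∀ x y, x ≠ y → ∃ v₀ v₁, v₀ ≠ v₁ ∧ SeparatesTies Sc x y v₀ v₁) (n : ℕ) :
    {S : Sym (Vote m) n | ∃ x y, x ≠ y ∧ (∀ b, Sc S x ≤ Sc S b) ∧ (∀ b, Sc S y ≤ Sc S b)}.ncard
      ≤ m * m * Nat.multichoose (Nat.factorial m - 1) n := by
  have htie : ∀ p : Fin m × Fin m, {S : Sym (Vote m) n | p.1 ≠ p.2 ∧ Sc S p.1 = Sc S p.2}.ncard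
      ≤ Nat.multichoose (Nat.factorial m - 1) n := by
    rintro ⟨x, y⟩
    by_cases hxy : x = y
    · simp [hxy]
    obtain ⟨v₀, v₁, hne, hv⟩ := hsep x y hxy
    simpa [hxy, Fintype.card_perm] using
      ncard_le_multichoose_of_separates (Bad := fun M => Sc M x = Sc M y) hne hv n
  calc _ ≤ (⋃ p : Fin m × Fin m, {S : Sym (Vote m) n | p.1 ≠ p.2 ∧ Sc S p.1 = Sc S p.2}).ncard := by
        refine Set.ncard_le_ncard ?_ (Set.toFinite _)
        rintro S ⟨x, y, hxy, hx, hy⟩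
        exact Set.mem_iUnion.mpr ⟨(x, y), hxy, le_antisymm (hx y) (hy x)⟩
    _ ≤ ∑ p : Fin m × Fin m, {S : Sym (Vote m) n | p.1 ≠ p.2 ∧ Sc S p.1 = Sc S p.2}.ncard :=
        Set.ncard_iUnion_le_of_fintype _
    _ ≤ m * m * Nat.multichoose (Nat.factorial m - 1) n := by
        simpa using Finset.sum_le_card_nsmul Finset.univ _ _ fun p _ => htie p

end Ties

section Tideman

variable {m : ℕ}

lemma exists_perm_apply_eq_apply_eq {α : Type*} [DecidableEq α] {x y p q : α} (hxy : x ≠ y)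
    (hpq : p ≠ q) : ∃ σ : Equiv.Perm α, σ x = p ∧ σ y = q := by
  have hp : p ≠ Equiv.swap x p y := fun h =>
    hxy.symm (by simpa [Equiv.swap_apply_eq_iff] using h.symm)
  refine ⟨(Equiv.swap x p).trans (Equiv.swap (Equiv.swap x p y) q), ?_, ?_⟩
  · simp [Equiv.swap_apply_of_ne_of_ne hp hpq]
  · simp

lemma sadv_sub_sadv (S : Multiset (Vote m)) (x y : Fin m) :
    (sadv S x y : ℤ) - sadv S y x = snAbove S x y - snAbove S y x := by
  simp only [sadv]; omega

lemma sScT_eq_sadv_add (S : Multiset (Vote m)) {x y : Fin m} (hyx : y ≠ x) :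
    sScT S x = sadv S y x + ∑ b ∈ ({x, y}ᶜ : Finset (Fin m)), sadv S b x := by
  rw [sScT, ← Finset.add_sum_erase _ _ (by simpa using hyx)]
  congr 2
  ext b
  simp [and_comm]

lemma sadv_replicate_trans_swap {v : Vote m} {p q : Fin m} (hq : (q : ℕ) = p + 1) {b : Fin m}
    (hbp : v b ≠ p) (hbq : v b ≠ q) (t : ℕ) (R : Multiset (Vote m)) (z : Fin m) :
    sadv (Multiset.replicate t (v.trans (Equiv.swap p q)) + R) b z =
      sadv (Multiset.replicate t v + R) b z := by
  have hb := val_trans_swap v p q b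
  have hz := val_trans_swap v p q z
  have hbp' : (v b : ℕ) ≠ p := Fin.val_ne_of_ne hbp
  have hbq' : (v b : ℕ) ≠ q := Fin.val_ne_of_ne hbq
  have h1 : (v.trans (Equiv.swap p q)) b < (v.trans (Equiv.swap p q)) z ↔ v b < v z := by
    simp only [Fin.lt_def, hb, hz]; split_ifs <;> omega
  have h2 : (v.trans (Equiv.swap p q)) z < (v.trans (Equiv.swap p q)) b ↔ v z < v b := by
    simp only [Fin.lt_def, hb, hz]; split_ifs <;> omega
  simp only [sadv, snAbove_replicate_add, h1, h2]

theorem separatesTies_sScT {v : Vote m} {p q : Fin m} (hq : (q : ℕ) = p + 1) {x y : Fin m}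
    (hx : v x = p) (hy : v y = q) : SeparatesTies sScT x y v (v.trans (Equiv.swap p q)) := by
  intro t ht R e₁ e₀
  have hxy : x ≠ y := by rintro rfl; exact absurd (hx.symm.trans hy) (Fin.ne_of_val_ne (by omega))
  have hothers : ∀ z, ∀ b ∈ ({x, y}ᶜ : Finset (Fin m)),
      sadv (Multiset.replicate t (v.trans (Equiv.swap p q)) + R) b z =
        sadv (Multiset.replicate t v + R) b z := by
    intro z b hb
    simp only [Finset.mem_compl, Finset.mem_insert, Finset.mem_singleton, not_or] at hb
    exact sadv_replicate_trans_swap hq (hx ▸ v.injective.ne hb.1) (hy ▸ v.injective.ne hb.2) t R z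
  rw [sScT_eq_sadv_add _ hxy.symm, sScT_eq_sadv_add _ hxy, Finset.pair_comm y x,
    Finset.sum_congr rfl (hothers x), Finset.sum_congr rfl (hothers y)] at e₁
  rw [sScT_eq_sadv_add _ hxy.symm, sScT_eq_sadv_add _ hxy, Finset.pair_comm y x] at e₀
  have hv : v x < v y := by rw [hx, hy, Fin.lt_def]; omega
  have hw : v.trans (Equiv.swap p q) y < v.trans (Equiv.swap p q) x := by
    rw [Fin.lt_def, val_trans_swap, val_trans_swap, hx, hy]; split_ifs <;> omega
  have d₁ := sadv_sub_sadv (Multiset.replicate t (v.trans (Equiv.swap p q)) + R) x y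
  have d₀ := sadv_sub_sadv (Multiset.replicate t v + R) x y
  simp only [snAbove_replicate_add, if_pos hv, if_neg (lt_asymm hv), if_pos hw,
    if_neg (lt_asymm hw)] at d₁ d₀
  omega

end Tideman

section RaisingPlans

variable {m : ℕ}

/-- The contribution to `n_{ab} - n_{ba}` of the vote `p.1` after `a` is raised in it by `p.2`
positions: the raise overtakes `b` iff `b` is among the `p.2` alternatives right above `a`. -/
def raiseGain (a b : Fin m) (p : Vote m × ℕ) : ℤ :=
  (if p.1 a < p.1 b then 1 else -1) + if p.1 b < p.1 a ∧ (p.1 a : ℕ) ≤ p.1 b + p.2 then 2 else 0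

/-- `P` pairs each vote with a number of positions by which to raise `a` in it, and these raises
make `a` a Condorcet-tie winner. -/
def IsRaisingPlan (a : Fin m) (P : Multiset (Vote m × ℕ)) : Prop :=
  ∀ b ≠ a, 0 ≤ (P.map (raiseGain a b)).sum

def raiseCost (P : Multiset (Vote m × ℕ)) : ℕ := (P.map Prod.snd).sum

noncomputable def minRaiseCost (S : Multiset (Vote m)) (a : Fin m) : ℕ :=
  sInf {c | ∃ P, P.map Prod.fst = S ∧ IsRaisingPlan a P ∧ raiseCost P = c}

@[simp] lemma raiseCost_cons (p : Vote m × ℕ) (P : Multiset (Vote m × ℕ)) :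
    raiseCost (p ::ₘ P) = p.2 + raiseCost P := by
  simp [raiseCost]

lemma raiseCost_eq_zero_iff {P : Multiset (Vote m × ℕ)} : raiseCost P = 0 ↔ ∀ p ∈ P, p.2 = 0 := by
  simp only [raiseCost, Multiset.sum_eq_zero_iff, Multiset.mem_map]
  exact ⟨fun h p hp => h _ ⟨p, hp, rfl⟩, fun h _ ⟨p, hp, e⟩ => e ▸ h p hp⟩

lemma raiseGain_le_one {a b : Fin m} (hb : b ≠ a) (p : Vote m × ℕ) : raiseGain a b p ≤ 1 := by
  have := p.1.injective.ne hb
  simp only [raiseGain]; split_ifs <;> omega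

lemma raiseGain_eq_one_of_le {a b : Fin m} (hb : b ≠ a) {v : Vote m} {k : ℕ}
    (hk : (v a : ℕ) ≤ k) : raiseGain a b (v, k) = 1 := by
  have := v.injective.ne hb
  simp only [raiseGain]; split_ifs <;> omega

lemma raiseGain_zero_of_lt {a b : Fin m} {v : Vote m} (h : v b < v a) :
    raiseGain a b (v, 0) = -1 := by
  simp only [raiseGain]; split_ifs <;> omega

lemma raiseGain_le_add_two (a b : Fin m) (v : Vote m) (j k : ℕ) :
    raiseGain a b (v, k) ≤ raiseGain a b (v, j) + 2 := by
  simp only [raiseGain]; split_ifs <;> omega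

lemma raiseGain_trans_swap_le {p q : Fin m} (hq : (q : ℕ) = p + 1) {a b : Fin m} (hb : b ≠ a)
    (v : Vote m) (k : ℕ) :
    raiseGain a b (v.trans (Equiv.swap p q), k) ≤ raiseGain a b (v, k + 1) := by
  have := Fin.val_ne_of_ne (v.injective.ne hb)
  simp only [raiseGain, Fin.lt_def, val_trans_swap]
  split_ifs <;> omega

/-- Raising `a` by one position and then by `k` more is raising it by `k + 1`. -/
lemma raiseGain_trans_swap_of_apply_eq {p q : Fin m} (hq : (q : ℕ) = p + 1) {a b : Fin m}
    (hb : b ≠ a) {v : Vote m} (ha : v a = q) (k : ℕ) :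
    raiseGain a b (v.trans (Equiv.swap p q), k) = raiseGain a b (v, k + 1) := by
  have := Fin.val_ne_of_ne (v.injective.ne hb)
  have ha' := congrArg Fin.val ha
  simp only [raiseGain, Fin.lt_def, val_trans_swap]
  split_ifs <;> omega

lemma IsRaisingPlan.replace_cons {a : Fin m} {p p' : Vote m × ℕ} {P : Multiset (Vote m × ℕ)}
    (hP : IsRaisingPlan a (p ::ₘ P)) (h : ∀ b ≠ a, raiseGain a b p ≤ raiseGain a b p') :
    IsRaisingPlan a (p' ::ₘ P) := by
  intro b hb
  have := hP b hb
  simp only [Multiset.map_cons, Multiset.sum_cons] at this ⊢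
  linarith [h b hb]

lemma isRaisingPlan_map_zero_iff {S : Multiset (Vote m)} {a : Fin m} :
    IsRaisingPlan a (S.map (·, 0)) ↔ sCondorcetTieWinner S a := by
  have hsum : ∀ b ≠ a, ((S.map (·, 0)).map (raiseGain a b)).sum =
      (snAbove S a b : ℤ) - snAbove S b a := by
    intro b hb
    induction S using Multiset.induction_on with
    | empty => simp [snAbove]
    | cons v S ih =>
      have := Fin.val_ne_of_ne (v.injective.ne hb)
      simp only [Multiset.map_cons, Multiset.sum_cons, snAbove_cons, ih, raiseGain, Fin.lt_def]
      split_ifs <;> omega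
  simp only [IsRaisingPlan, sCondorcetTieWinner_iff]
  refine forall₂_congr fun b hb => ?_
  rw [hsum b hb]
  omega

lemma exists_isRaisingPlan (S : Multiset (Vote m)) (a : Fin m) :
    ∃ P, P.map Prod.fst = S ∧ IsRaisingPlan a P := by
  refine ⟨S.map (·, m), by simp [Multiset.map_map], fun b hb => ?_⟩
  rw [Multiset.map_map]
  refine Multiset.sum_nonneg fun g hg => ?_
  obtain ⟨v, -, rfl⟩ := Multiset.mem_map.mp hg
  simp [raiseGain_eq_one_of_le hb (v := v) (v a).isLt.le]

lemma minRaiseCost_le {a : Fin m} {P : Multiset (Vote m × ℕ)} (hP : IsRaisingPlan a P) :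
    minRaiseCost (P.map Prod.fst) a ≤ raiseCost P :=
  Nat.sInf_le ⟨P, rfl, hP, rfl⟩

lemma exists_raiseCost_eq_minRaiseCost (S : Multiset (Vote m)) (a : Fin m) :
    ∃ P, P.map Prod.fst = S ∧ IsRaisingPlan a P ∧ raiseCost P = minRaiseCost S a := by
  obtain ⟨P, hS, hP⟩ := exists_isRaisingPlan S a
  exact Nat.sInf_mem (s := {c | ∃ P, P.map Prod.fst = S ∧ IsRaisingPlan a P ∧ raiseCost P = c})
    ⟨_, P, hS, hP, rfl⟩

lemma exists_cons_raiseCost_eq_minRaiseCost (v : Vote m) (R : Multiset (Vote m)) (a : Fin m) :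
    ∃ k P, P.map Prod.fst = R ∧ IsRaisingPlan a ((v, k) ::ₘ P) ∧
      k + raiseCost P = minRaiseCost (v ::ₘ R) a := by
  obtain ⟨P, hS, hP, hc⟩ := exists_raiseCost_eq_minRaiseCost (v ::ₘ R) a
  obtain ⟨⟨w, k⟩, hmem, rfl, hR⟩ := (Multiset.map_eq_cons _ _ _ _).mpr hS
  refine ⟨k, P.erase (w, k), hR, ?_, ?_⟩ <;> rw [← Multiset.cons_erase hmem] at hP hc
  exacts [hP, by simpa using hc]

end RaisingPlans

section DodgsonScore

variable {m : ℕ}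

/-- Each unit of cost in a raising plan is realised by one adjacent swap moving `a` up. -/
theorem exists_reach_of_isRaisingPlan {a : Fin m} {P : Multiset (Vote m × ℕ)}
    (hP : IsRaisingPlan a P) :
    ∃ k ≤ raiseCost P, ∃ T, Reach sAdjSwap k (P.map Prod.fst) T ∧ sCondorcetTieWinner T a := by
  induction hc : raiseCost P using Nat.strong_induction_on generalizing P with
  | _ c ih =>
  by_cases hzero : raiseCost P = 0
  · rw [raiseCost_eq_zero_iff] at hzero
    have hP0 : (P.map Prod.fst).map (·, 0) = P := by
      rw [Multiset.map_map]
      conv_rhs => rw [← Multiset.map_id P]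
      exact Multiset.map_congr rfl fun p hp => Prod.ext rfl (hzero p hp).symm
    exact ⟨0, Nat.zero_le _, _, rfl, isRaisingPlan_map_zero_iff.mp (by rwa [hP0])⟩
  obtain ⟨⟨v, k⟩, hmem, hk⟩ := not_forall₂.mp (mt raiseCost_eq_zero_iff.mpr hzero)
  obtain ⟨j, rfl⟩ : ∃ j, k = j + 1 := ⟨k - 1, by omega⟩
  rw [← Multiset.cons_erase hmem] at hP hc ⊢
  simp only [raiseCost_cons, Multiset.map_cons] at hc ⊢
  by_cases htop : (v a : ℕ) = 0
  · have hP' : IsRaisingPlan a ((v, 0) ::ₘ P.erase (v, j + 1)) := hP.replace_cons fun b hb => by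
      rw [raiseGain_eq_one_of_le hb (by omega), raiseGain_eq_one_of_le hb (by omega)]
    obtain ⟨k, hk, T, hT, hTa⟩ := ih _ (by simp; omega) hP' rfl
    exact ⟨k, by simp at hk; omega, T, by simpa using hT, hTa⟩
  · let p : Fin m := ⟨v a - 1, by omega⟩
    have hq : ((v a : Fin m) : ℕ) = p + 1 := by simp only [p]; omega
    have hP' : IsRaisingPlan a ((v.trans (Equiv.swap p (v a)), j) ::ₘ P.erase (v, j + 1)) :=
      hP.replace_cons fun b hb => (raiseGain_trans_swap_of_apply_eq hq hb rfl j).ge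
    obtain ⟨k, hk, T, hT, hTa⟩ := ih _ (by simp; omega) hP' rfl
    refine ⟨k + 1, by simp at hk; omega, T, ⟨_, ?_, by simpa using hT⟩, hTa⟩
    exact ⟨v, Multiset.mem_cons_self _ _, _, ⟨p, v a, hq, rfl⟩, by simp⟩

lemma minRaiseCost_le_succ_of_sAdjSwap {S T : Multiset (Vote m)} (h : sAdjSwap S T) (a : Fin m) :
    minRaiseCost S a ≤ minRaiseCost T a + 1 := by
  obtain ⟨v, hv, w, ⟨p, q, hq, rfl⟩, rfl⟩ := h
  obtain ⟨k, P, hR, hP, hc⟩ :=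
    exists_cons_raiseCost_eq_minRaiseCost (v.trans (Equiv.swap p q)) (S.erase v) a
  have hP' : IsRaisingPlan a ((v, k + 1) ::ₘ P) :=
    hP.replace_cons fun b hb => raiseGain_trans_swap_le hq hb v k
  have := minRaiseCost_le hP'
  rw [Multiset.map_cons, hR, Multiset.cons_erase hv, raiseCost_cons] at this
  omega

lemma minRaiseCost_le_of_reach {a : Fin m} {k : ℕ} {S T : Multiset (Vote m)}
    (h : Reach sAdjSwap k S T) (hT : sCondorcetTieWinner T a) : minRaiseCost S a ≤ k := by
  induction k generalizing S with
  | zero =>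
    obtain rfl : S = T := h
    simpa [Multiset.map_map, raiseCost] using minRaiseCost_le (isRaisingPlan_map_zero_iff.mpr hT)
  | succ k ih =>
    obtain ⟨R, hSR, hR⟩ := h
    have := minRaiseCost_le_succ_of_sAdjSwap hSR a
    have := ih hR
    omega

theorem minRaiseCost_eq_sScD (S : Multiset (Vote m)) (a : Fin m) :
    minRaiseCost S a = sScD S a := by
  obtain ⟨P, rfl, hP, hc⟩ := exists_raiseCost_eq_minRaiseCost S a
  obtain ⟨k, hk, T, hT, hTa⟩ := exists_reach_of_isRaisingPlan hP
  have hne : {k | ∃ T, Reach sAdjSwap k (P.map Prod.fst) T ∧ sCondorcetTieWinner T a}.Nonempty :=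
    ⟨k, T, hT, hTa⟩
  obtain ⟨T', hT', hT'a⟩ := Nat.sInf_mem hne
  have hD : sScD (P.map Prod.fst) a ≤ k := Nat.sInf_le ⟨T, hT, hTa⟩
  exact le_antisymm (minRaiseCost_le_of_reach hT' hT'a) (hc ▸ hD.trans hk)

lemma sCondorcetTieWinner_of_minRaiseCost_eq_zero {S : Multiset (Vote m)} {a : Fin m}
    (h : minRaiseCost S a = 0) : sCondorcetTieWinner S a := by
  obtain ⟨P, rfl, hP, hc⟩ := exists_raiseCost_eq_minRaiseCost S a
  obtain ⟨k, hk, T, hT, hTa⟩ := exists_reach_of_isRaisingPlan hP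
  rw [hc, h, Nat.le_zero] at hk
  subst hk
  obtain rfl : P.map Prod.fst = T := hT
  exact hTa

end DodgsonScore

lemma Multiset.replicate_add_le_of_cons_le {α : Type*} {f : Multiset α → ℕ} {v w : α}
    (h : ∀ R, f (v ::ₘ R) ≤ f (w ::ₘ R)) (t : ℕ) (R : Multiset α) :
    f (Multiset.replicate t v + R) ≤ f (Multiset.replicate t w + R) := by
  induction t generalizing R with
  | zero => simp
  | succ t ih =>
    calc f (Multiset.replicate (t + 1) v + R) = f (Multiset.replicate t v + v ::ₘ R) := by
          rw [Multiset.replicate_succ, Multiset.cons_add, Multiset.add_cons]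
      _ ≤ f (Multiset.replicate t w + v ::ₘ R) := ih _
      _ = f (v ::ₘ (Multiset.replicate t w + R)) := by rw [Multiset.add_cons]
      _ ≤ f (w ::ₘ (Multiset.replicate t w + R)) := h _
      _ = f (Multiset.replicate (t + 1) w + R) := by rw [Multiset.replicate_succ, Multiset.cons_add]

section DodgsonTies

variable {m : ℕ}

/-- Moves the top alternative of `v` to the bottom, keeping the order of the others. -/
def demote (v : Vote m) : Vote m := v.trans (finRotate m).symm

lemma val_demote (v : Vote m) (z : Fin m) :
    ((demote v z : Fin m) : ℕ) = if (v z : ℕ) = 0 then m - 1 else v z - 1 := by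
  obtain ⟨n, rfl⟩ : ∃ n, m = n + 1 := ⟨m - 1, by have := z.pos; omega⟩
  rw [demote, Equiv.trans_apply, finRotate_symm_apply, Fin.coe_sub_one]
  by_cases h : v z = 0 <;> simp [h, Fin.val_eq_zero_iff]

lemma ne_demote (hm : 2 ≤ m) (v : Vote m) : v ≠ demote v := by
  intro h
  have := val_demote v (v.symm ⟨0, by omega⟩)
  rw [← h] at this
  simp at this
  omega

lemma raiseGain_le_raiseGain_demote {x y b : Fin m} (hyx : y ≠ x) (hby : b ≠ y) {v : Vote m}
    (hx : (v x : ℕ) = 0) (k : ℕ) : raiseGain y b (v, k) ≤ raiseGain y b (demote v, k) := by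
  have := Fin.val_ne_of_ne (v.injective.ne hyx)
  have := Fin.val_ne_of_ne (v.injective.ne hby)
  have := (v b).isLt
  have := (v y).isLt
  simp only [raiseGain, Fin.lt_def, val_demote]
  split_ifs <;> omega

lemma minRaiseCost_cons_le_of_apply_eq_zero {a : Fin m} {top : Vote m} (htop : (top a : ℕ) = 0)
    (v : Vote m) (R : Multiset (Vote m)) :
    minRaiseCost (top ::ₘ R) a ≤ minRaiseCost (v ::ₘ R) a := by
  obtain ⟨k, P, hR, hP, hc⟩ := exists_cons_raiseCost_eq_minRaiseCost v R a
  have hP' : IsRaisingPlan a ((top, 0) ::ₘ P) := hP.replace_cons fun b hb =>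
    (raiseGain_le_one hb _).trans (raiseGain_eq_one_of_le hb htop.le).ge
  have := minRaiseCost_le hP'
  simp only [Multiset.map_cons, hR, raiseCost_cons] at this
  omega

/-- Replacing a vote with `a` at the bottom by one with `a` on top gains `2` against every
alternative, which pays for one unit of any raise. -/
lemma minRaiseCost_cons_lt_of_apply_eq_zero {a : Fin m} {top v : Vote m}
    (htop : (top a : ℕ) = 0) (hv : ∀ b ≠ a, v b < v a) (R : Multiset (Vote m))
    (hpos : minRaiseCost (v ::ₘ R) a ≠ 0) :
    minRaiseCost (top ::ₘ R) a < minRaiseCost (v ::ₘ R) a := by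
  obtain ⟨k, P, hR, hP, hc⟩ := exists_cons_raiseCost_eq_minRaiseCost v R a
  have hgain : ∀ b ≠ a, raiseGain a b (top, 0) = 1 := fun b hb => raiseGain_eq_one_of_le hb htop.le
  rcases Nat.eq_zero_or_pos k with rfl | hk
  · obtain ⟨⟨u, j⟩, hmem, hj⟩ := not_forall₂.mp (mt (raiseCost_eq_zero_iff (P := P)).mpr (by omega))
    rw [← Multiset.cons_erase hmem] at hP hR hc
    have hP' : IsRaisingPlan a ((top, 0) ::ₘ (u, j - 1) ::ₘ P.erase (u, j)) := by
      intro b hb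
      have := hP b hb
      simp only [Multiset.map_cons, Multiset.sum_cons] at this ⊢
      linarith [hgain b hb, raiseGain_zero_of_lt (hv b hb), raiseGain_le_add_two a b u (j - 1) j]
    have := minRaiseCost_le hP'
    simp only [Multiset.map_cons, raiseCost_cons] at this hR hc
    rw [hR] at this
    omega
  · have hP' : IsRaisingPlan a ((top, 0) ::ₘ P) := hP.replace_cons fun b hb =>
      (raiseGain_le_one hb _).trans (hgain b hb).ge
    have := minRaiseCost_le hP'
    simp only [Multiset.map_cons, hR, raiseCost_cons] at this
    omega

lemma minRaiseCost_demote_cons_le {x y : Fin m} (hyx : y ≠ x) {top : Vote m}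
    (htop : (top x : ℕ) = 0) (R : Multiset (Vote m)) :
    minRaiseCost (demote top ::ₘ R) y ≤ minRaiseCost (top ::ₘ R) y := by
  obtain ⟨k, P, hR, hP, hc⟩ := exists_cons_raiseCost_eq_minRaiseCost top R y
  have hP' : IsRaisingPlan y ((demote top, k) ::ₘ P) := hP.replace_cons fun b hb =>
    raiseGain_le_raiseGain_demote hyx hb htop k
  have := minRaiseCost_le hP'
  simp only [Multiset.map_cons, hR, raiseCost_cons] at this
  omega

theorem separatesTies_sScD {x y : Fin m} (hxy : x ≠ y) {top : Vote m} (htop : (top x : ℕ) = 0) :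
    SeparatesTies sScD x y top (demote top) := by
  intro t ht R e₁ e₀
  simp only [← minRaiseCost_eq_sScD] at e₁ e₀
  have hbot : ∀ b ≠ x, demote top b < demote top x := by
    intro b hb
    have := Fin.val_ne_of_ne (top.injective.ne hb)
    have := (top b).isLt
    rw [Fin.lt_def, val_demote, val_demote]
    split_ifs <;> omega
  have hx_le := Multiset.replicate_add_le_of_cons_le (f := (minRaiseCost · x))
    (minRaiseCost_cons_le_of_apply_eq_zero htop (demote top)) t R
  have hy_le := Multiset.replicate_add_le_of_cons_le (f := (minRaiseCost · y))
    (minRaiseCost_demote_cons_le hxy.symm htop) t R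
  by_cases hpos : minRaiseCost (Multiset.replicate t (demote top) + R) x = 0
  · have htx : top x < top y := by
      have := Fin.val_ne_of_ne (top.injective.ne hxy.symm)
      rw [Fin.lt_def]; omega
    have h₁x := sCondorcetTieWinner_iff.mp (sCondorcetTieWinner_of_minRaiseCost_eq_zero hpos) y
      hxy.symm
    have h₁y := sCondorcetTieWinner_iff.mp
      (sCondorcetTieWinner_of_minRaiseCost_eq_zero (e₁ ▸ hpos)) x hxy
    have h₀y := sCondorcetTieWinner_iff.mp
      (sCondorcetTieWinner_of_minRaiseCost_eq_zero (S := Multiset.replicate t top + R) (a := y)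
        (by omega)) x hxy
    simp only [snAbove_replicate_add, if_pos htx, if_neg (lt_asymm htx), if_pos (hbot y hxy.symm),
      if_neg (lt_asymm (hbot y hxy.symm))] at h₁x h₁y h₀y
    omega
  · obtain ⟨s, rfl⟩ : ∃ s, t = s + 1 := ⟨t - 1, by omega⟩
    have := Multiset.replicate_add_le_of_cons_le (f := (minRaiseCost · x))
      (minRaiseCost_cons_le_of_apply_eq_zero htop (demote top)) s (top ::ₘ R)
    have := minRaiseCost_cons_lt_of_apply_eq_zero htop hbot (Multiset.replicate s (demote top) + R)
    simp only [Multiset.replicate_succ, Multiset.cons_add, Multiset.add_cons] at *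
    omega

end DodgsonTies

/-- For fixed `m`, the proportion of voting situations with `n` agents having more
than one Tideman winner tends to `0` as `n → ∞`, and likewise the proportion of
voting situations with more than one Dodgson winner tends to `0`. -/
theorem stmt_10 {m : ℕ} (hm : 2 ≤ m) :
    Filter.Tendsto (fun n : ℕ =>
        (Set.ncard {S : Sym (Vote m) n | ∃ x y : Fin m, x ≠ y ∧
            sTWinner (S : Multiset (Vote m)) x ∧ sTWinner (S : Multiset (Vote m)) y} : ℝ) /
          Nat.choose (n + Nat.factorial m - 1) n)
      Filter.atTop (nhds 0) ∧
    Filter.Tendsto (fun n : ℕ =>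
        (Set.ncard {S : Sym (Vote m) n | ∃ x y : Fin m, x ≠ y ∧
            sDWinner (S : Multiset (Vote m)) x ∧ sDWinner (S : Multiset (Vote m)) y} : ℝ) /
          Nat.choose (n + Nat.factorial m - 1) n)
      Filter.atTop (nhds 0) := by
  have hd : 2 ≤ Nat.factorial m := hm.trans (Nat.self_le_factorial m)
  refine ⟨tendsto_div_choose_of_le_multichoose hd _ fun n => ncard_two_minimizers_le sScT ?_ n,
    tendsto_div_choose_of_le_multichoose hd _ fun n => ncard_two_minimizers_le sScD ?_ n⟩
  · intro x y hxy
    have hpq : (⟨0, by omega⟩ : Fin m) ≠ ⟨1, hm⟩ := by simp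
    obtain ⟨v, hx, hy⟩ := exists_perm_apply_eq_apply_eq hxy hpq
    exact ⟨v, _, fun h => by simpa [hx, hy] using congrArg (· x) h,
      separatesTies_sScT rfl hx hy⟩
  · intro x y hxy
    exact ⟨_, _, ne_demote hm _,
      separatesTies_sScD hxy (top := Equiv.swap x ⟨0, by omega⟩) (by simp)⟩
end

section
/- If profiles P and R, each consisting of n votes, differ in exactly one vote, then |Sc_D[P](d) − Sc_D[R](d)| ≤ m − 1 for every alternative d ∈ A. -/
open Finset Filter

lemma reach_trans {α : Type*} {r : α → α → Prop} :
    ∀ (a : ℕ) {P Q S : α} (b : ℕ), Reach r a P Q → Reach r b Q S →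
      Reach r (a + b) P S := by
  intro a
  induction a with
  | zero =>
    intro P Q S b h1 h2
    have : P = Q := h1
    subst this
    simpa using h2
  | succ k ih =>
    intro P Q S b h1 h2
    obtain ⟨T, hT, hTQ⟩ := h1
    have hk : k + 1 + b = (k + b) + 1 := by omega
    rw [hk]
    exact ⟨T, hT, ih b hTQ h2⟩

lemma reach_vote {m n : ℕ} :
    ∀ (t : ℕ) (v w : Vote m), Reach AdjSwapVote t v w →
      ∀ (P : Profile m n) (i : Fin n), P i = v →
        Reach AdjSwap t P (Function.update P i w) := by
  intro t
  induction t with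
  | zero =>
    intro v w h P i hP
    have hvw : v = w := h
    show P = Function.update P i w
    rw [← hvw, ← hP, Function.update_eq_self]
  | succ k ih =>
    intro v w h P i hP
    obtain ⟨u, hu, huw⟩ := h
    refine ⟨Function.update P i u, ⟨i, ?_, ?_⟩, ?_⟩
    · rw [Function.update_self, hP]; exact hu
    · intro j hj; rw [Function.update_of_ne hj]
    · have := ih u w huw (Function.update P i u) i (Function.update_self i u P)
      rwa [Function.update_idem] at this

lemma move_top {m : ℕ} :
    ∀ (c : ℕ) (v : Vote m) (d : Fin m), (v d : ℕ) = c →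
      ∃ w : Vote m, Reach AdjSwapVote c v w ∧ (w d : ℕ) = 0 := by
  intro c
  induction c with
  | zero =>
    intro v d h
    exact ⟨v, rfl, h⟩
  | succ k ih =>
    intro v d h
    have hk : k < m := by have := (v d).isLt; omega
    set q : Fin m := v d with hq
    set p : Fin m := ⟨k, hk⟩ with hp
    set w1 : Vote m := v.trans (Equiv.swap p q) with hw1
    have hswap : AdjSwapVote v w1 := by
      refine ⟨p, q, ?_, rfl⟩
      simp [hp, ← hq, h]
    have hw1d : (w1 d : ℕ) = k := by
      have : w1 d = Equiv.swap p q (v d) := by simp [hw1, Equiv.trans_apply]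
      rw [this, ← hq, Equiv.swap_apply_right]
    obtain ⟨w, hw, hwd⟩ := ih w1 d hw1d
    exact ⟨w, ⟨w1, hswap, hw⟩, hwd⟩

lemma mimic {m n : ℕ} :
    ∀ (k : ℕ) (R Q : Profile m n), Reach AdjSwap k R Q →
      ∀ (P : Profile m n) (i : Fin n), (∀ j, j ≠ i → P j = R j) →
        ∃ k' ≤ k, ∃ Q', Reach AdjSwap k' P Q' ∧ (∀ j, j ≠ i → Q' j = Q j) ∧
          Q' i = P i := by
  intro k
  induction k with
  | zero =>
    intro R Q h P i hoth
    have : R = Q := h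
    subst this
    exact ⟨0, le_refl 0, P, rfl, hoth, rfl⟩
  | succ k ih =>
    intro R Q h P i hoth
    obtain ⟨R1, ⟨i1, hsw, hoth1⟩, hR1Q⟩ := h
    by_cases hii : i1 = i
    · subst hii
      have hP : ∀ j, j ≠ i1 → P j = R1 j := fun j hj => by
        rw [hoth j hj, ← hoth1 j hj]
      obtain ⟨k', hk', Q', h1, h2, h3⟩ := ih R1 Q hR1Q P i1 hP
      exact ⟨k', by omega, Q', h1, h2, h3⟩
    · set P1 := Function.update P i1 (R1 i1) with hP1
      have hswP : AdjSwap P P1 := by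
        refine ⟨i1, ?_, ?_⟩
        · rw [hP1, Function.update_self, hoth i1 hii]; exact hsw
        · intro j hj; rw [hP1, Function.update_of_ne hj]
      have hP1R1 : ∀ j, j ≠ i → P1 j = R1 j := by
        intro j hj
        by_cases hji1 : j = i1
        · subst hji1; rw [hP1, Function.update_self]
        · rw [hP1, Function.update_of_ne hji1, hoth j hj, ← hoth1 j hji1]
      obtain ⟨k', hk', Q', h1, h2, h3⟩ := ih R1 Q hR1Q P1 i hP1R1
      refine ⟨k' + 1, by omega, Q', ⟨P1, hswP, h1⟩, h2, ?_⟩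
      rw [h3, hP1, Function.update_of_ne (Ne.symm hii)]

lemma key_ctw {m n : ℕ} (Q Q' : Profile m n) (i : Fin n) (d : Fin m)
    (hoff : ∀ j, j ≠ i → Q' j = Q j) (htop : (Q' i d : ℕ) = 0)
    (h : CondorcetTieWinner Q d) : CondorcetTieWinner Q' d := by
  intro b hb
  have h1 : nAbove Q' b d ≤ nAbove Q b d := by
    apply Finset.card_le_card
    intro j hj
    simp only [Finset.mem_filter, Finset.mem_univ, true_and] at *
    by_cases hji : j = i
    · subst hji
      exfalso
      have := Fin.lt_iff_val_lt_val.mp hj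
      omega
    · rw [← hoff j hji]; exact hj
  have h2 : nAbove Q d b ≤ nAbove Q' d b := by
    apply Finset.card_le_card
    intro j hj
    simp only [Finset.mem_filter, Finset.mem_univ, true_and] at *
    by_cases hji : j = i
    · subst hji
      have hne : Q' j b ≠ Q' j d := fun hc => hb ((Q' j).injective hc)
      have : (Q' j b : ℕ) ≠ (Q' j d : ℕ) := fun hc => hne (Fin.ext hc)
      exact Fin.lt_iff_val_lt_val.mpr (by omega)
    · rw [hoff j hji]; exact hj
  have h3 := h b hb
  unfold adv at *
  omega

lemma reach_set_nonempty {m n : ℕ} (P : Profile m n) (d : Fin m) :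
    ∃ k Q, Reach AdjSwap k P Q ∧ CondorcetTieWinner Q d := by
  have main : ∀ s : Finset (Fin n), ∃ k Q, Reach AdjSwap k P Q ∧
      ∀ i ∈ s, (Q i d : ℕ) = 0 := by
    intro s
    induction s using Finset.induction_on with
    | empty => exact ⟨0, P, rfl, by simp⟩
    | @insert i s hi ih =>
      obtain ⟨k, Q, hreach, htop⟩ := ih
      obtain ⟨w, hw, hwd⟩ := move_top ((Q i d : ℕ)) (Q i) d rfl
      refine ⟨k + (Q i d : ℕ), Function.update Q i w,
        reach_trans k _ hreach (reach_vote _ _ _ hw Q i rfl), ?_⟩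
      intro j hj
      rcases Finset.mem_insert.mp hj with hj | hj
      · subst hj; rw [Function.update_self]; exact hwd
      · have hji : j ≠ i := fun hc => hi (hc ▸ hj)
        rw [Function.update_of_ne hji]; exact htop j hj
  obtain ⟨k, Q, hreach, htop⟩ := main Finset.univ
  refine ⟨k, Q, hreach, ?_⟩
  intro b hb
  have h0 : nAbove Q b d = 0 := by
    rw [nAbove, Finset.card_eq_zero, Finset.filter_eq_empty_iff]
    intro j _
    have := htop j (Finset.mem_univ j)
    intro hc
    have := Fin.lt_iff_val_lt_val.mp hc
    omega
  rw [adv, h0]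
  exact Nat.zero_sub _

lemma ScD_le_of_oth {m n : ℕ} (P R : Profile m n) (i : Fin n)
    (hoth : ∀ j, j ≠ i → P j = R j) (d : Fin m) :
    ScD P d ≤ ScD R d + (m - 1) := by
  obtain ⟨k0, Q0, h1, h2⟩ := reach_set_nonempty R d
  have hne : {k | ∃ Q, Reach AdjSwap k R Q ∧ CondorcetTieWinner Q d}.Nonempty :=
    ⟨k0, Q0, h1, h2⟩
  obtain ⟨Q, hreach, hctw⟩ : ∃ Q, Reach AdjSwap (ScD R d) R Q ∧
      CondorcetTieWinner Q d := Nat.sInf_mem hne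
  obtain ⟨k', hk', Q', hPQ', hoffQ, hQ'i⟩ := mimic (ScD R d) R Q hreach P i hoth
  obtain ⟨w, hw, hwd⟩ := move_top ((Q' i d : ℕ)) (Q' i) d rfl
  have hlift := reach_vote _ _ _ hw Q' i rfl
  have hfinal : Reach AdjSwap (k' + (Q' i d : ℕ)) P (Function.update Q' i w) :=
    reach_trans k' _ hPQ' hlift
  have hctw'' : CondorcetTieWinner (Function.update Q' i w) d := by
    apply key_ctw Q _ i d
    · intro j hj; rw [Function.update_of_ne hj]; exact hoffQ j hj
    · rw [Function.update_self]; exact hwd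
    · exact hctw
  have hle : ScD P d ≤ k' + (Q' i d : ℕ) :=
    Nat.sInf_le ⟨Function.update Q' i w, hfinal, hctw''⟩
  have hb : (Q' i d : ℕ) ≤ m - 1 := by have := (Q' i d).isLt; omega
  omega

/-- If two profiles of `n` votes differ in exactly one vote, their Dodgson scores
differ by at most `m − 1`. -/
theorem stmt_12 {m n : ℕ} (hm : 2 ≤ m) (P R : Profile m n) (i : Fin n)
    (hi : P i ≠ R i) (hoth : ∀ j, j ≠ i → P j = R j) (d : Fin m) :
    |(ScD P d : ℤ) - ScD R d| ≤ (m : ℤ) - 1 := by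
  have h1 := ScD_le_of_oth P R i hoth d
  have h2 := ScD_le_of_oth R P i (fun j hj => (hoth j hj).symm) d
  rw [abs_le]
  constructor <;> [skip; skip] <;>
    · have hm1 : (1 : ℤ) ≤ (m : ℤ) := by exact_mod_cast Nat.one_le_of_lt hm
      omega
end

section
/- Let k be a positive integer, d an alternative, and P a profile of n votes. If Sc_D[P](d) < Sc_D[P](a) − 2k(m − 1) for every alternative a ≠ d, then for every profile R obtained from P by changing at most k votes, d is the unique Dodgson winner of R. The same statement holds with the Dodgson score Sc_D replaced throughout by the DQ score Sc_Q. -/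
open Finset Filter

/-! Changing one vote moves every score of an alternative by at most `m - 1`. For DQ, each
pairwise count `n_{xy}` moves by at most one, so `n_{ba} - n_{ab}` moves by at most two and
each term `⌈adv/2⌉` by at most one. For Dodgson, `a` is first moved to the top of the changed
vote (at most `m - 1` swaps); replaying an optimal swap sequence of the old profile on the
other votes then makes `a` a Condorcet-tie winner again, since having `a` on top of a vote only
helps `a`. Hence changing `k` votes moves all scores by at most `k(m - 1)`, and a gap of more
than `2k(m - 1)` survives. -/

section Hamming

variable {ι β : Type*} [Fintype ι] [DecidableEq ι] [DecidableEq β]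

theorem le_add_hammingDist_mul_of_update_le {f : (ι → β) → ℕ} {c : ℕ}
    (hf : ∀ P i v, f (Function.update P i v) ≤ f P + c) (P R : ι → β) :
    f R ≤ f P + hammingDist R P * c := by
  suffices key : ∀ (s : Finset ι) (P : ι → β), (∀ j ∉ s, R j = P j) → f R ≤ f P + #s * c by
    refine key _ P fun j hj => ?_
    simpa [hammingDist] using hj
  intro s
  induction s using Finset.induction_on with
  | empty =>
    intro P hRP
    simp [funext fun j => hRP j (Finset.notMem_empty j)]
  | insert i s hi ih =>
    intro P hRP
    have hR : ∀ j ∉ s, R j = Function.update P i (R i) j := by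
      intro j hj
      by_cases hji : j = i
      · simp [hji]
      · simpa [hji] using hRP j (by simp [hji, hj])
    calc f R ≤ f (Function.update P i (R i)) + #s * c := ih _ hR
      _ ≤ f P + c + #s * c := by gcongr; exact hf P i (R i)
      _ = f P + #(insert i s) * c := by rw [Finset.card_insert_of_notMem hi]; ring

end Hamming

theorem Reach.trans {α : Type*} {r : α → α → Prop} {k l : ℕ} {P Q S : α}
    (hPQ : Reach r k P Q) (hQS : Reach r l Q S) : Reach r (k + l) P S := by
  induction k generalizing P with
  | zero => cases hPQ; simpa using hQS
  | succ k ih =>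
    obtain ⟨P₁, hP₁, hP₁Q⟩ := hPQ
    rw [Nat.succ_add]
    exact ⟨P₁, hP₁, ih hP₁Q⟩

section Dodgson

variable {m n : ℕ}

theorem adjSwap_update {P : Profile m n} {i : Fin n} {w : Vote m} (h : AdjSwapVote (P i) w) :
    AdjSwap P (Function.update P i w) :=
  ⟨i, by simpa using h, fun j hj => Function.update_of_ne hj _ _⟩

theorem exists_reach_update_top (a : Fin m) (P : Profile m n) (i : Fin n) :
    ∃ v : Vote m, (v a : ℕ) = 0 ∧ Reach AdjSwap (P i a) P (Function.update P i v) := by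
  generalize hc : (P i a : ℕ) = c
  induction c generalizing P with
  | zero => exact ⟨P i, hc, by simp [Reach]⟩
  | succ c ih =>
    have hlt : c + 1 < m := hc ▸ (P i a).isLt
    let p : Fin m := ⟨c, by omega⟩
    let q : Fin m := ⟨c + 1, hlt⟩
    let v₁ : Vote m := (P i).trans (Equiv.swap p q)
    have hv₁ : (v₁ a : ℕ) = c := by
      have : P i a = q := Fin.ext hc
      simp [v₁, this, p]
    obtain ⟨v, hv, hreach⟩ := ih (Function.update P i v₁) (by simpa using hv₁)
    refine ⟨v, hv, Function.update P i v₁, adjSwap_update ⟨p, q, rfl, by simp [v₁]⟩, ?_⟩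
    simpa using hreach

theorem exists_reach_forall_top (a : Fin m) (P : Profile m n) :
    ∃ t Q, Reach AdjSwap t P Q ∧ ∀ i, (Q i a : ℕ) = 0 := by
  suffices key : ∀ (s : Finset (Fin n)) (P : Profile m n), (∀ i ∉ s, (P i a : ℕ) = 0) →
      ∃ t Q, Reach AdjSwap t P Q ∧ ∀ i, (Q i a : ℕ) = 0 from
    key Finset.univ P (by simp)
  intro s
  induction s using Finset.induction_on with
  | empty => exact fun P hP => ⟨0, P, rfl, fun i => hP i (Finset.notMem_empty i)⟩
  | insert i s _ ih =>
    intro P hP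
    obtain ⟨v, hv, hreach⟩ := exists_reach_update_top a P i
    obtain ⟨t, Q, hreachQ, hQ⟩ := ih (Function.update P i v) fun j hj => by
      by_cases hji : j = i
      · simpa [hji] using hv
      · simpa [hji] using hP j (by simp [hji, hj])
    exact ⟨_, Q, hreach.trans hreachQ, hQ⟩

theorem condorcetTieWinner_of_forall_top {Q : Profile m n} {a : Fin m}
    (h : ∀ i, (Q i a : ℕ) = 0) : CondorcetTieWinner Q a := by
  intro b _
  have : nAbove Q b a = 0 := by
    simp only [nAbove, Finset.card_eq_zero, Finset.filter_eq_empty_iff, Fin.lt_def, h]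
    simp
  simp [adv, this]

theorem exists_reach_condorcetTieWinner (P : Profile m n) (a : Fin m) :
    ∃ t Q, Reach AdjSwap t P Q ∧ CondorcetTieWinner Q a :=
  let ⟨t, Q, hreach, hQ⟩ := exists_reach_forall_top a P
  ⟨t, Q, hreach, condorcetTieWinner_of_forall_top hQ⟩

theorem AdjSwap.update {P Q : Profile m n} (h : AdjSwap P Q) (i : Fin n) (v : Vote m) :
    Function.update P i v = Function.update Q i v ∨
      AdjSwap (Function.update P i v) (Function.update Q i v) := by
  obtain ⟨j, hj, hfix⟩ := h
  by_cases hji : j = i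
  · subst hji
    left
    ext1 x
    by_cases hx : x = j <;> simp [hx, hfix]
  · right
    refine ⟨j, by simpa [hji] using hj, fun x hx => ?_⟩
    by_cases hxi : x = i <;> simp [hxi, hfix x hx]

theorem Reach.update {s : ℕ} {P Q : Profile m n} (h : Reach AdjSwap s P Q) (i : Fin n)
    (v : Vote m) :
    ∃ t ≤ s, Reach AdjSwap t (Function.update P i v) (Function.update Q i v) := by
  induction s generalizing P with
  | zero => cases h; exact ⟨0, le_rfl, rfl⟩
  | succ s ih =>
    obtain ⟨P₁, hP₁, hP₁Q⟩ := h
    obtain ⟨t, hts, ht⟩ := ih hP₁Q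
    rcases hP₁.update i v with heq | hstep
    · exact ⟨t, by omega, heq ▸ ht⟩
    · exact ⟨t + 1, by omega, _, hstep, ht⟩

theorem nAbove_update_top_le {Q : Profile m n} {a : Fin m} (i : Fin n) {v : Vote m}
    (hv : (v a : ℕ) = 0) (b : Fin m) : nAbove (Function.update Q i v) b a ≤ nAbove Q b a := by
  refine Finset.card_le_card fun j hj => ?_
  by_cases hji : j = i
  · subst hji
    simp only [Finset.mem_filter, Function.update_self] at hj
    exact absurd hj.2 (by simp [Fin.lt_def, hv])
  · simpa [hji] using hj

theorem nAbove_le_update_top {Q : Profile m n} {a b : Fin m} (i : Fin n) {v : Vote m}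
    (hv : (v a : ℕ) = 0) (hb : b ≠ a) : nAbove Q a b ≤ nAbove (Function.update Q i v) a b := by
  refine Finset.card_le_card fun j hj => ?_
  by_cases hji : j = i
  · subst hji
    have : v b ≠ v a := fun h => hb (v.injective h)
    simp only [Finset.mem_filter, Finset.mem_univ, Function.update_self, true_and, Fin.lt_def, hv]
    omega
  · simpa [hji] using hj

theorem CondorcetTieWinner.update_top {Q : Profile m n} {a : Fin m} (h : CondorcetTieWinner Q a)
    (i : Fin n) {v : Vote m} (hv : (v a : ℕ) = 0) :
    CondorcetTieWinner (Function.update Q i v) a := by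
  intro b hb
  have h₁ := nAbove_update_top_le (Q := Q) i hv b
  have h₂ := nAbove_le_update_top (Q := Q) i hv hb
  have h₃ := h b hb
  simp only [adv] at h₃ ⊢
  omega

theorem scD_le_of_reach {P Q : Profile m n} {a : Fin m} {t : ℕ} (h : Reach AdjSwap t P Q)
    (hQ : CondorcetTieWinner Q a) : ScD P a ≤ t :=
  Nat.sInf_le ⟨Q, h, hQ⟩

theorem exists_reach_scD (P : Profile m n) (a : Fin m) :
    ∃ Q, Reach AdjSwap (ScD P a) P Q ∧ CondorcetTieWinner Q a :=
  Nat.sInf_mem (s := {k | ∃ Q, Reach AdjSwap k P Q ∧ CondorcetTieWinner Q a})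
    (exists_reach_condorcetTieWinner P a)

theorem scD_update_le (P : Profile m n) (i : Fin n) (v : Vote m) (a : Fin m) :
    ScD (Function.update P i v) a ≤ ScD P a + (m - 1) := by
  obtain ⟨Q, hPQ, hQ⟩ := exists_reach_scD P a
  obtain ⟨w, hw, hlift⟩ := exists_reach_update_top a (Function.update P i v) i
  obtain ⟨t, ht, hreplay⟩ := hPQ.update i w
  simp only [Function.update_self, Function.update_idem] at hlift
  have hva : (v a : ℕ) ≤ m - 1 := by have := (v a).isLt; omega
  calc ScD (Function.update P i v) a ≤ v a + t :=
        scD_le_of_reach (hlift.trans hreplay) (hQ.update_top i hw)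
    _ ≤ ScD P a + (m - 1) := by omega

theorem scD_le_add_hammingDist_mul (P R : Profile m n) (a : Fin m) :
    ScD R a ≤ ScD P a + hammingDist R P * (m - 1) :=
  le_add_hammingDist_mul_of_update_le (f := fun P => ScD P a)
    (fun P i v => scD_update_le P i v a) P R

end Dodgson

section DodgsonQuick

variable {m n : ℕ}

theorem nAbove_le_add_hammingDist (P R : Profile m n) (x y : Fin m) :
    nAbove R x y ≤ nAbove P x y + hammingDist R P := by
  calc nAbove R x y
        ≤ #(univ.filter (fun i => P i x < P i y) ∪ univ.filter (fun i => R i ≠ P i)) := by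
        refine Finset.card_le_card fun i hi => ?_
        by_cases hRP : R i = P i <;> simp_all
    _ ≤ nAbove P x y + hammingDist R P := Finset.card_union_le _ _

theorem scQ_le_add_hammingDist_mul (P R : Profile m n) (a : Fin m) :
    ScQ R a ≤ ScQ P a + hammingDist R P * (m - 1) := by
  have hcard : #{b | b ≠ a} = m - 1 := by
    rw [Finset.filter_ne', Finset.card_erase_of_mem (Finset.mem_univ a), Finset.card_univ,
      Fintype.card_fin]
  calc ScQ R a ≤ ∑ b ∈ {b | b ≠ a}, ((adv P b a + 1) / 2 + hammingDist R P) := by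
        refine Finset.sum_le_sum fun b _ => ?_
        have h₁ := nAbove_le_add_hammingDist P R b a
        have h₂ := nAbove_le_add_hammingDist R P a b
        rw [hammingDist_comm] at h₂
        simp only [adv]
        omega
    _ = ScQ P a + hammingDist R P * (m - 1) := by
        rw [Finset.sum_add_distrib, Finset.sum_const, hcard, smul_eq_mul, mul_comm, ScQ]

end DodgsonQuick

theorem lt_of_lt_sub_two_mul_of_hammingDist_le {m n k : ℕ} {score : Profile m n → Fin m → ℕ}
    (hscore : ∀ P R a, score R a ≤ score P a + hammingDist R P * (m - 1))
    {d a : Fin m} {P R : Profile m n}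
    (hgap : (score P d : ℤ) < score P a - 2 * k * ((m : ℤ) - 1))
    (hRP : hammingDist R P ≤ k) : score R d < score R a := by
  have hm : (m : ℤ) - 1 = ((m - 1 : ℕ) : ℤ) := by have := d.pos; omega
  have hd := hscore P R d
  have ha := hscore R P a
  have hdist : hammingDist R P * (m - 1) ≤ k * (m - 1) := Nat.mul_le_mul_right _ hRP
  rw [hammingDist_comm] at ha
  rw [hm] at hgap
  zify at hd ha hdist ⊢
  linarith

theorem stmt_13_general {m n : ℕ} (k : ℕ) (d : Fin m)
    (P : Profile m n) :
    ((∀ a, a ≠ d → (ScD P d : ℤ) < (ScD P a : ℤ) - 2 * (k : ℤ) * ((m : ℤ) - 1)) →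
      ∀ R : Profile m n,
        (Finset.univ.filter (fun i => R i ≠ P i)).card ≤ k →
        ∀ a, a ≠ d → ScD R d < ScD R a) ∧
    ((∀ a, a ≠ d → (ScQ P d : ℤ) < (ScQ P a : ℤ) - 2 * (k : ℤ) * ((m : ℤ) - 1)) →
      ∀ R : Profile m n,
        (Finset.univ.filter (fun i => R i ≠ P i)).card ≤ k →
        ∀ a, a ≠ d → ScQ R d < ScQ R a) :=
  ⟨fun hgap _ hRP a ha =>
      lt_of_lt_sub_two_mul_of_hammingDist_le scD_le_add_hammingDist_mul (hgap a ha) hRP,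
    fun hgap _ hRP a ha =>
      lt_of_lt_sub_two_mul_of_hammingDist_le scQ_le_add_hammingDist_mul (hgap a ha) hRP⟩

/-- If in `P` the alternative `d` has Dodgson score more than `2k(m−1)` below that
of every other alternative, then `d` remains the unique Dodgson winner of every
profile obtained from `P` by changing at most `k` votes; and likewise with the
Dodgson score replaced throughout by the DQ score. -/
theorem stmt_13 {m n : ℕ} (hm : 2 ≤ m) (k : ℕ) (hk : 1 ≤ k) (d : Fin m)
    (P : Profile m n) :
    ((∀ a, a ≠ d → (ScD P d : ℤ) < (ScD P a : ℤ) - 2 * (k : ℤ) * ((m : ℤ) - 1)) →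
      ∀ R : Profile m n,
        (Finset.univ.filter (fun i => R i ≠ P i)).card ≤ k →
        ∀ a, a ≠ d → ScD R d < ScD R a) ∧
    ((∀ a, a ≠ d → (ScQ P d : ℤ) < (ScQ P a : ℤ) - 2 * (k : ℤ) * ((m : ℤ) - 1)) →
      ∀ R : Profile m n,
        (Finset.univ.filter (fun i => R i ≠ P i)).card ≤ k →
        ∀ a, a ≠ d → ScQ R d < ScQ R a) :=
  stmt_13_general k d P
end

section
/- Let t ≥ 1 be an integer and let P_t be the profile on the four alternatives {a, b, c, x} consisting of 78t votes: 32t votes a>b>c>x, 24t votes c>x>a>b, 20t votes b>c>x>a, and 2t votes c>b>a>x. Then Sc_Q[P_t](a) = 12t, Sc_Q[P_t](b) = 17t, Sc_Q[P_t](c) = 13t, Sc_Q[P_t](x) = 54t, and Sc_D[P_t](a) = 14t, Sc_D[P_t](b) = 17t, Sc_D[P_t](c) = 13t, Sc_D[P_t](x) = 54t; consequently a is the unique DQ winner of P_t while c is the unique Dodgson winner of P_t. -/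
open Finset Filter

/-- The vote `a > b > c > x` on alternatives `a = 0`, `b = 1`, `c = 2`, `x = 3`. -/
def vof1 : Vote 4 := 1
/-- The vote `c > x > a > b` (positions: `c ↦ 0`, `x ↦ 1`, `a ↦ 2`, `b ↦ 3`). -/
def vof2 : Vote 4 := (Equiv.swap 0 2).trans (Equiv.swap 1 3)
/-- The vote `b > c > x > a` (positions: `b ↦ 0`, `c ↦ 1`, `x ↦ 2`, `a ↦ 3`). -/
def vof3 : Vote 4 := (finRotate 4).symm
/-- The vote `c > b > a > x` (positions: `c ↦ 0`, `b ↦ 1`, `a ↦ 2`, `x ↦ 3`). -/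
def vof4 : Vote 4 := Equiv.swap 0 2

/-- The profile `P_t` of `78t` votes: `32t` votes `a>b>c>x`, `24t` votes `c>x>a>b`,
`20t` votes `b>c>x>a` and `2t` votes `c>b>a>x`. -/
def Pt (t : ℕ) : Profile 4 (78 * t) := fun i =>
  if (i : ℕ) < 32 * t then vof1
  else if (i : ℕ) < 56 * t then vof2
  else if (i : ℕ) < 76 * t then vof3
  else vof4


/- ### Counting machinery -/

lemma sum_blocks (N c1 c2 c3 c4 : ℕ) (h1 : c1 ≤ c2) (h2 : c2 ≤ c3) (h3 : c3 ≤ c4) (h4 : c4 ≤ N)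
    (F : ℕ → ℕ) (v1 v2 v3 v4 v5 : ℕ)
    (hF1 : ∀ i, i < c1 → F i = v1)
    (hF2 : ∀ i, c1 ≤ i → i < c2 → F i = v2)
    (hF3 : ∀ i, c2 ≤ i → i < c3 → F i = v3)
    (hF4 : ∀ i, c3 ≤ i → i < c4 → F i = v4)
    (hF5 : ∀ i, c4 ≤ i → i < N → F i = v5) :
    ∑ i ∈ Finset.range N, F i =
      c1*v1 + (c2-c1)*v2 + (c3-c2)*v3 + (c4-c3)*v4 + (N-c4)*v5 := by
  have e : Finset.range N = Finset.range (c1 + ((c2-c1) + ((c3-c2) + ((c4-c3) + (N-c4))))) := by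
    congr 1; omega
  rw [e, Finset.sum_range_add, Finset.sum_range_add, Finset.sum_range_add, Finset.sum_range_add]
  have s1 : ∑ i ∈ Finset.range c1, F i = c1 * v1 := by
    rw [Finset.sum_congr rfl (fun i hi => hF1 i (Finset.mem_range.mp hi)),
      Finset.sum_const, Finset.card_range, smul_eq_mul]
  have s2 : ∑ i ∈ Finset.range (c2-c1), F (c1+i) = (c2-c1) * v2 := by
    rw [Finset.sum_congr rfl (fun i hi => hF2 (c1+i) (by omega)
      (by have := Finset.mem_range.mp hi; omega)),
      Finset.sum_const, Finset.card_range, smul_eq_mul]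
  have s3 : ∑ i ∈ Finset.range (c3-c2), F (c1+((c2-c1)+i)) = (c3-c2) * v3 := by
    rw [Finset.sum_congr rfl (fun i hi => hF3 _ (by omega)
      (by have := Finset.mem_range.mp hi; omega)),
      Finset.sum_const, Finset.card_range, smul_eq_mul]
  have s4 : ∑ i ∈ Finset.range (c4-c3), F (c1+((c2-c1)+((c3-c2)+i))) = (c4-c3) * v4 := by
    rw [Finset.sum_congr rfl (fun i hi => hF4 _ (by omega)
      (by have := Finset.mem_range.mp hi; omega)),
      Finset.sum_const, Finset.card_range, smul_eq_mul]
  have s5 : ∑ i ∈ Finset.range (N-c4), F (c1+((c2-c1)+((c3-c2)+((c4-c3)+i)))) = (N-c4) * v5 := by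
    rw [Finset.sum_congr rfl (fun i hi => hF5 _ (by omega)
      (by have := Finset.mem_range.mp hi; omega)),
      Finset.sum_const, Finset.card_range, smul_eq_mul]
  rw [s1, s2, s3, s4, s5]; ring

lemma sum5 (N c1 c2 c3 c4 : ℕ) (h1 : c1 ≤ c2) (h2 : c2 ≤ c3) (h3 : c3 ≤ c4) (h4 : c4 ≤ N)
    (k : Fin N → ℕ) (v1 v2 v3 v4 v5 : ℕ)
    (hk : ∀ i : Fin N, k i = if (i:ℕ) < c1 then v1 else if (i:ℕ) < c2 then v2
      else if (i:ℕ) < c3 then v3 else if (i:ℕ) < c4 then v4 else v5) :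
    ∑ i, k i = c1*v1 + (c2-c1)*v2 + (c3-c2)*v3 + (c4-c3)*v4 + (N-c4)*v5 := by
  have e1 : ∑ i, k i = ∑ i : Fin N, (fun n : ℕ => if n < c1 then v1 else if n < c2 then v2
      else if n < c3 then v3 else if n < c4 then v4 else v5) (i:ℕ) :=
    Finset.sum_congr rfl (fun i _ => hk i)
  rw [e1, Fin.sum_univ_eq_sum_range (fun n : ℕ => if n < c1 then v1 else if n < c2 then v2
      else if n < c3 then v3 else if n < c4 then v4 else v5) N]
  apply sum_blocks N c1 c2 c3 c4 h1 h2 h3 h4 <;> intro i hi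
  · rw [if_pos hi]
  · intro hi2; rw [if_neg (by omega), if_pos hi2]
  · intro hi2; rw [if_neg (by omega), if_neg (by omega), if_pos hi2]
  · intro hi2; rw [if_neg (by omega), if_neg (by omega), if_neg (by omega), if_pos hi2]
  · intro hi2; rw [if_neg (by omega), if_neg (by omega), if_neg (by omega), if_neg (by omega)]

lemma nAbove5 (N c1 c2 c3 c4 : ℕ) (h1 : c1 ≤ c2) (h2 : c2 ≤ c3) (h3 : c3 ≤ c4) (h4 : c4 ≤ N)
    (u1 u2 u3 u4 u5 : Vote 4) (G : Profile 4 N)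
    (hG : ∀ i : Fin N, G i = if (i:ℕ) < c1 then u1 else if (i:ℕ) < c2 then u2
      else if (i:ℕ) < c3 then u3 else if (i:ℕ) < c4 then u4 else u5)
    (x y : Fin 4) :
    nAbove G x y = c1*(if u1 x < u1 y then 1 else 0) + (c2-c1)*(if u2 x < u2 y then 1 else 0)
      + (c3-c2)*(if u3 x < u3 y then 1 else 0) + (c4-c3)*(if u4 x < u4 y then 1 else 0)
      + (N-c4)*(if u5 x < u5 y then 1 else 0) := by
  rw [nAbove, Finset.card_filter]
  apply sum5 N c1 c2 c3 c4 h1 h2 h3 h4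
  intro i
  rw [hG i]
  split_ifs <;> rfl

/- ### The modified votes and profiles used for the Dodgson upper bounds -/

/-- `c > a > x > b` -/
def wa' : Vote 4 := vof2.trans (Equiv.swap 1 2)
/-- `a > c > x > b` -/
def wa : Vote 4 := wa'.trans (Equiv.swap 0 1)
/-- `b > a > c > x` -/
def wb : Vote 4 := vof1.trans (Equiv.swap 0 1)
/-- `a > c > b > x` -/
def wc : Vote 4 := vof1.trans (Equiv.swap 1 2)
/-- `x > c > a > b` -/
def wx2 : Vote 4 := vof2.trans (Equiv.swap 0 1)
/-- `b > x > c > a` -/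
def wx3' : Vote 4 := vof3.trans (Equiv.swap 1 2)
/-- `x > b > c > a` -/
def wx3 : Vote 4 := wx3'.trans (Equiv.swap 0 1)

def Qa (t : ℕ) : Profile 4 (78 * t) := fun i =>
  if (i : ℕ) < 32 * t then vof1
  else if (i : ℕ) < 39 * t then wa
  else if (i : ℕ) < 56 * t then vof2
  else if (i : ℕ) < 76 * t then vof3
  else vof4

def Qb (t : ℕ) : Profile 4 (78 * t) := fun i =>
  if (i : ℕ) < 17 * t then wb
  else if (i : ℕ) < 32 * t then vof1
  else if (i : ℕ) < 56 * t then vof2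
  else if (i : ℕ) < 76 * t then vof3
  else vof4

def Qc (t : ℕ) : Profile 4 (78 * t) := fun i =>
  if (i : ℕ) < 13 * t then wc
  else if (i : ℕ) < 32 * t then vof1
  else if (i : ℕ) < 56 * t then vof2
  else if (i : ℕ) < 76 * t then vof3
  else vof4

def Qx (t : ℕ) : Profile 4 (78 * t) := fun i =>
  if (i : ℕ) < 32 * t then vof1
  else if (i : ℕ) < 56 * t then wx2
  else if (i : ℕ) < 71 * t then wx3
  else if (i : ℕ) < 76 * t then vof3
  else vof4

lemma n_Pt_0_1 (t : ℕ) : nAbove (Pt t) 0 1 = 56*t := by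
  rw [nAbove5 (78*t) (32*t) (56*t) (76*t) (76*t) (by omega) (by omega) (by omega) (by omega)
      vof1 vof2 vof3 vof4 vof4 (Pt t)
      (fun i => by simp only [Pt]; split_ifs <;> rfl) 0 1,
    show (if vof1 (0:Fin 4) < vof1 1 then (1:ℕ) else 0) = 1 from by decide,
    show (if vof2 (0:Fin 4) < vof2 1 then (1:ℕ) else 0) = 1 from by decide,
    show (if vof3 (0:Fin 4) < vof3 1 then (1:ℕ) else 0) = 0 from by decide,
    show (if vof4 (0:Fin 4) < vof4 1 then (1:ℕ) else 0) = 0 from by decide]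
  omega

lemma n_Pt_0_2 (t : ℕ) : nAbove (Pt t) 0 2 = 32*t := by
  rw [nAbove5 (78*t) (32*t) (56*t) (76*t) (76*t) (by omega) (by omega) (by omega) (by omega)
      vof1 vof2 vof3 vof4 vof4 (Pt t)
      (fun i => by simp only [Pt]; split_ifs <;> rfl) 0 2,
    show (if vof1 (0:Fin 4) < vof1 2 then (1:ℕ) else 0) = 1 from by decide,
    show (if vof2 (0:Fin 4) < vof2 2 then (1:ℕ) else 0) = 0 from by decide,
    show (if vof3 (0:Fin 4) < vof3 2 then (1:ℕ) else 0) = 0 from by decide,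
    show (if vof4 (0:Fin 4) < vof4 2 then (1:ℕ) else 0) = 0 from by decide]
  omega

lemma n_Pt_0_3 (t : ℕ) : nAbove (Pt t) 0 3 = 34*t := by
  rw [nAbove5 (78*t) (32*t) (56*t) (76*t) (76*t) (by omega) (by omega) (by omega) (by omega)
      vof1 vof2 vof3 vof4 vof4 (Pt t)
      (fun i => by simp only [Pt]; split_ifs <;> rfl) 0 3,
    show (if vof1 (0:Fin 4) < vof1 3 then (1:ℕ) else 0) = 1 from by decide,
    show (if vof2 (0:Fin 4) < vof2 3 then (1:ℕ) else 0) = 0 from by decide,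
    show (if vof3 (0:Fin 4) < vof3 3 then (1:ℕ) else 0) = 0 from by decide,
    show (if vof4 (0:Fin 4) < vof4 3 then (1:ℕ) else 0) = 1 from by decide]
  omega

lemma n_Pt_1_0 (t : ℕ) : nAbove (Pt t) 1 0 = 22*t := by
  rw [nAbove5 (78*t) (32*t) (56*t) (76*t) (76*t) (by omega) (by omega) (by omega) (by omega)
      vof1 vof2 vof3 vof4 vof4 (Pt t)
      (fun i => by simp only [Pt]; split_ifs <;> rfl) 1 0,
    show (if vof1 (1:Fin 4) < vof1 0 then (1:ℕ) else 0) = 0 from by decide,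
    show (if vof2 (1:Fin 4) < vof2 0 then (1:ℕ) else 0) = 0 from by decide,
    show (if vof3 (1:Fin 4) < vof3 0 then (1:ℕ) else 0) = 1 from by decide,
    show (if vof4 (1:Fin 4) < vof4 0 then (1:ℕ) else 0) = 1 from by decide]
  omega

lemma n_Pt_1_2 (t : ℕ) : nAbove (Pt t) 1 2 = 52*t := by
  rw [nAbove5 (78*t) (32*t) (56*t) (76*t) (76*t) (by omega) (by omega) (by omega) (by omega)
      vof1 vof2 vof3 vof4 vof4 (Pt t)
      (fun i => by simp only [Pt]; split_ifs <;> rfl) 1 2,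
    show (if vof1 (1:Fin 4) < vof1 2 then (1:ℕ) else 0) = 1 from by decide,
    show (if vof2 (1:Fin 4) < vof2 2 then (1:ℕ) else 0) = 0 from by decide,
    show (if vof3 (1:Fin 4) < vof3 2 then (1:ℕ) else 0) = 1 from by decide,
    show (if vof4 (1:Fin 4) < vof4 2 then (1:ℕ) else 0) = 0 from by decide]
  omega

lemma n_Pt_1_3 (t : ℕ) : nAbove (Pt t) 1 3 = 54*t := by
  rw [nAbove5 (78*t) (32*t) (56*t) (76*t) (76*t) (by omega) (by omega) (by omega) (by omega)
      vof1 vof2 vof3 vof4 vof4 (Pt t)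
      (fun i => by simp only [Pt]; split_ifs <;> rfl) 1 3,
    show (if vof1 (1:Fin 4) < vof1 3 then (1:ℕ) else 0) = 1 from by decide,
    show (if vof2 (1:Fin 4) < vof2 3 then (1:ℕ) else 0) = 0 from by decide,
    show (if vof3 (1:Fin 4) < vof3 3 then (1:ℕ) else 0) = 1 from by decide,
    show (if vof4 (1:Fin 4) < vof4 3 then (1:ℕ) else 0) = 1 from by decide]
  omega

lemma n_Pt_2_0 (t : ℕ) : nAbove (Pt t) 2 0 = 46*t := by
  rw [nAbove5 (78*t) (32*t) (56*t) (76*t) (76*t) (by omega) (by omega) (by omega) (by omega)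
      vof1 vof2 vof3 vof4 vof4 (Pt t)
      (fun i => by simp only [Pt]; split_ifs <;> rfl) 2 0,
    show (if vof1 (2:Fin 4) < vof1 0 then (1:ℕ) else 0) = 0 from by decide,
    show (if vof2 (2:Fin 4) < vof2 0 then (1:ℕ) else 0) = 1 from by decide,
    show (if vof3 (2:Fin 4) < vof3 0 then (1:ℕ) else 0) = 1 from by decide,
    show (if vof4 (2:Fin 4) < vof4 0 then (1:ℕ) else 0) = 1 from by decide]
  omega

lemma n_Pt_2_1 (t : ℕ) : nAbove (Pt t) 2 1 = 26*t := by
  rw [nAbove5 (78*t) (32*t) (56*t) (76*t) (76*t) (by omega) (by omega) (by omega) (by omega)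
      vof1 vof2 vof3 vof4 vof4 (Pt t)
      (fun i => by simp only [Pt]; split_ifs <;> rfl) 2 1,
    show (if vof1 (2:Fin 4) < vof1 1 then (1:ℕ) else 0) = 0 from by decide,
    show (if vof2 (2:Fin 4) < vof2 1 then (1:ℕ) else 0) = 1 from by decide,
    show (if vof3 (2:Fin 4) < vof3 1 then (1:ℕ) else 0) = 0 from by decide,
    show (if vof4 (2:Fin 4) < vof4 1 then (1:ℕ) else 0) = 1 from by decide]
  omega

lemma n_Pt_2_3 (t : ℕ) : nAbove (Pt t) 2 3 = 78*t := by
  rw [nAbove5 (78*t) (32*t) (56*t) (76*t) (76*t) (by omega) (by omega) (by omega) (by omega)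
      vof1 vof2 vof3 vof4 vof4 (Pt t)
      (fun i => by simp only [Pt]; split_ifs <;> rfl) 2 3,
    show (if vof1 (2:Fin 4) < vof1 3 then (1:ℕ) else 0) = 1 from by decide,
    show (if vof2 (2:Fin 4) < vof2 3 then (1:ℕ) else 0) = 1 from by decide,
    show (if vof3 (2:Fin 4) < vof3 3 then (1:ℕ) else 0) = 1 from by decide,
    show (if vof4 (2:Fin 4) < vof4 3 then (1:ℕ) else 0) = 1 from by decide]
  omega

lemma n_Pt_3_0 (t : ℕ) : nAbove (Pt t) 3 0 = 44*t := by
  rw [nAbove5 (78*t) (32*t) (56*t) (76*t) (76*t) (by omega) (by omega) (by omega) (by omega)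
      vof1 vof2 vof3 vof4 vof4 (Pt t)
      (fun i => by simp only [Pt]; split_ifs <;> rfl) 3 0,
    show (if vof1 (3:Fin 4) < vof1 0 then (1:ℕ) else 0) = 0 from by decide,
    show (if vof2 (3:Fin 4) < vof2 0 then (1:ℕ) else 0) = 1 from by decide,
    show (if vof3 (3:Fin 4) < vof3 0 then (1:ℕ) else 0) = 1 from by decide,
    show (if vof4 (3:Fin 4) < vof4 0 then (1:ℕ) else 0) = 0 from by decide]
  omega

lemma n_Pt_3_1 (t : ℕ) : nAbove (Pt t) 3 1 = 24*t := by
  rw [nAbove5 (78*t) (32*t) (56*t) (76*t) (76*t) (by omega) (by omega) (by omega) (by omega)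
      vof1 vof2 vof3 vof4 vof4 (Pt t)
      (fun i => by simp only [Pt]; split_ifs <;> rfl) 3 1,
    show (if vof1 (3:Fin 4) < vof1 1 then (1:ℕ) else 0) = 0 from by decide,
    show (if vof2 (3:Fin 4) < vof2 1 then (1:ℕ) else 0) = 1 from by decide,
    show (if vof3 (3:Fin 4) < vof3 1 then (1:ℕ) else 0) = 0 from by decide,
    show (if vof4 (3:Fin 4) < vof4 1 then (1:ℕ) else 0) = 0 from by decide]
  omega

lemma n_Pt_3_2 (t : ℕ) : nAbove (Pt t) 3 2 = 0*t := by
  rw [nAbove5 (78*t) (32*t) (56*t) (76*t) (76*t) (by omega) (by omega) (by omega) (by omega)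
      vof1 vof2 vof3 vof4 vof4 (Pt t)
      (fun i => by simp only [Pt]; split_ifs <;> rfl) 3 2,
    show (if vof1 (3:Fin 4) < vof1 2 then (1:ℕ) else 0) = 0 from by decide,
    show (if vof2 (3:Fin 4) < vof2 2 then (1:ℕ) else 0) = 0 from by decide,
    show (if vof3 (3:Fin 4) < vof3 2 then (1:ℕ) else 0) = 0 from by decide,
    show (if vof4 (3:Fin 4) < vof4 2 then (1:ℕ) else 0) = 0 from by decide]
  omega

lemma n_Qa_1_0 (t : ℕ) : nAbove (Qa t) 1 0 = 22*t := by
  rw [nAbove5 (78*t) (32*t) (39*t) (56*t) (76*t) (by omega) (by omega) (by omega) (by omega)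
      vof1 wa vof2 vof3 vof4 (Qa t)
      (fun i => rfl) 1 0,
    show (if vof1 (1:Fin 4) < vof1 0 then (1:ℕ) else 0) = 0 from by decide,
    show (if wa (1:Fin 4) < wa 0 then (1:ℕ) else 0) = 0 from by decide,
    show (if vof2 (1:Fin 4) < vof2 0 then (1:ℕ) else 0) = 0 from by decide,
    show (if vof3 (1:Fin 4) < vof3 0 then (1:ℕ) else 0) = 1 from by decide,
    show (if vof4 (1:Fin 4) < vof4 0 then (1:ℕ) else 0) = 1 from by decide]
  omega

lemma n_Qa_0_1 (t : ℕ) : nAbove (Qa t) 0 1 = 56*t := by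
  rw [nAbove5 (78*t) (32*t) (39*t) (56*t) (76*t) (by omega) (by omega) (by omega) (by omega)
      vof1 wa vof2 vof3 vof4 (Qa t)
      (fun i => rfl) 0 1,
    show (if vof1 (0:Fin 4) < vof1 1 then (1:ℕ) else 0) = 1 from by decide,
    show (if wa (0:Fin 4) < wa 1 then (1:ℕ) else 0) = 1 from by decide,
    show (if vof2 (0:Fin 4) < vof2 1 then (1:ℕ) else 0) = 1 from by decide,
    show (if vof3 (0:Fin 4) < vof3 1 then (1:ℕ) else 0) = 0 from by decide,
    show (if vof4 (0:Fin 4) < vof4 1 then (1:ℕ) else 0) = 0 from by decide]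
  omega

lemma n_Qa_2_0 (t : ℕ) : nAbove (Qa t) 2 0 = 39*t := by
  rw [nAbove5 (78*t) (32*t) (39*t) (56*t) (76*t) (by omega) (by omega) (by omega) (by omega)
      vof1 wa vof2 vof3 vof4 (Qa t)
      (fun i => rfl) 2 0,
    show (if vof1 (2:Fin 4) < vof1 0 then (1:ℕ) else 0) = 0 from by decide,
    show (if wa (2:Fin 4) < wa 0 then (1:ℕ) else 0) = 0 from by decide,
    show (if vof2 (2:Fin 4) < vof2 0 then (1:ℕ) else 0) = 1 from by decide,
    show (if vof3 (2:Fin 4) < vof3 0 then (1:ℕ) else 0) = 1 from by decide,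
    show (if vof4 (2:Fin 4) < vof4 0 then (1:ℕ) else 0) = 1 from by decide]
  omega

lemma n_Qa_0_2 (t : ℕ) : nAbove (Qa t) 0 2 = 39*t := by
  rw [nAbove5 (78*t) (32*t) (39*t) (56*t) (76*t) (by omega) (by omega) (by omega) (by omega)
      vof1 wa vof2 vof3 vof4 (Qa t)
      (fun i => rfl) 0 2,
    show (if vof1 (0:Fin 4) < vof1 2 then (1:ℕ) else 0) = 1 from by decide,
    show (if wa (0:Fin 4) < wa 2 then (1:ℕ) else 0) = 1 from by decide,
    show (if vof2 (0:Fin 4) < vof2 2 then (1:ℕ) else 0) = 0 from by decide,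
    show (if vof3 (0:Fin 4) < vof3 2 then (1:ℕ) else 0) = 0 from by decide,
    show (if vof4 (0:Fin 4) < vof4 2 then (1:ℕ) else 0) = 0 from by decide]
  omega

lemma n_Qa_3_0 (t : ℕ) : nAbove (Qa t) 3 0 = 37*t := by
  rw [nAbove5 (78*t) (32*t) (39*t) (56*t) (76*t) (by omega) (by omega) (by omega) (by omega)
      vof1 wa vof2 vof3 vof4 (Qa t)
      (fun i => rfl) 3 0,
    show (if vof1 (3:Fin 4) < vof1 0 then (1:ℕ) else 0) = 0 from by decide,
    show (if wa (3:Fin 4) < wa 0 then (1:ℕ) else 0) = 0 from by decide,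
    show (if vof2 (3:Fin 4) < vof2 0 then (1:ℕ) else 0) = 1 from by decide,
    show (if vof3 (3:Fin 4) < vof3 0 then (1:ℕ) else 0) = 1 from by decide,
    show (if vof4 (3:Fin 4) < vof4 0 then (1:ℕ) else 0) = 0 from by decide]
  omega

lemma n_Qa_0_3 (t : ℕ) : nAbove (Qa t) 0 3 = 41*t := by
  rw [nAbove5 (78*t) (32*t) (39*t) (56*t) (76*t) (by omega) (by omega) (by omega) (by omega)
      vof1 wa vof2 vof3 vof4 (Qa t)
      (fun i => rfl) 0 3,
    show (if vof1 (0:Fin 4) < vof1 3 then (1:ℕ) else 0) = 1 from by decide,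
    show (if wa (0:Fin 4) < wa 3 then (1:ℕ) else 0) = 1 from by decide,
    show (if vof2 (0:Fin 4) < vof2 3 then (1:ℕ) else 0) = 0 from by decide,
    show (if vof3 (0:Fin 4) < vof3 3 then (1:ℕ) else 0) = 0 from by decide,
    show (if vof4 (0:Fin 4) < vof4 3 then (1:ℕ) else 0) = 1 from by decide]
  omega

lemma n_Qb_0_1 (t : ℕ) : nAbove (Qb t) 0 1 = 39*t := by
  rw [nAbove5 (78*t) (17*t) (32*t) (56*t) (76*t) (by omega) (by omega) (by omega) (by omega)
      wb vof1 vof2 vof3 vof4 (Qb t)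
      (fun i => rfl) 0 1,
    show (if wb (0:Fin 4) < wb 1 then (1:ℕ) else 0) = 0 from by decide,
    show (if vof1 (0:Fin 4) < vof1 1 then (1:ℕ) else 0) = 1 from by decide,
    show (if vof2 (0:Fin 4) < vof2 1 then (1:ℕ) else 0) = 1 from by decide,
    show (if vof3 (0:Fin 4) < vof3 1 then (1:ℕ) else 0) = 0 from by decide,
    show (if vof4 (0:Fin 4) < vof4 1 then (1:ℕ) else 0) = 0 from by decide]
  omega

lemma n_Qb_1_0 (t : ℕ) : nAbove (Qb t) 1 0 = 39*t := by
  rw [nAbove5 (78*t) (17*t) (32*t) (56*t) (76*t) (by omega) (by omega) (by omega) (by omega)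
      wb vof1 vof2 vof3 vof4 (Qb t)
      (fun i => rfl) 1 0,
    show (if wb (1:Fin 4) < wb 0 then (1:ℕ) else 0) = 1 from by decide,
    show (if vof1 (1:Fin 4) < vof1 0 then (1:ℕ) else 0) = 0 from by decide,
    show (if vof2 (1:Fin 4) < vof2 0 then (1:ℕ) else 0) = 0 from by decide,
    show (if vof3 (1:Fin 4) < vof3 0 then (1:ℕ) else 0) = 1 from by decide,
    show (if vof4 (1:Fin 4) < vof4 0 then (1:ℕ) else 0) = 1 from by decide]
  omega

lemma n_Qb_2_1 (t : ℕ) : nAbove (Qb t) 2 1 = 26*t := by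
  rw [nAbove5 (78*t) (17*t) (32*t) (56*t) (76*t) (by omega) (by omega) (by omega) (by omega)
      wb vof1 vof2 vof3 vof4 (Qb t)
      (fun i => rfl) 2 1,
    show (if wb (2:Fin 4) < wb 1 then (1:ℕ) else 0) = 0 from by decide,
    show (if vof1 (2:Fin 4) < vof1 1 then (1:ℕ) else 0) = 0 from by decide,
    show (if vof2 (2:Fin 4) < vof2 1 then (1:ℕ) else 0) = 1 from by decide,
    show (if vof3 (2:Fin 4) < vof3 1 then (1:ℕ) else 0) = 0 from by decide,
    show (if vof4 (2:Fin 4) < vof4 1 then (1:ℕ) else 0) = 1 from by decide]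
  omega

lemma n_Qb_1_2 (t : ℕ) : nAbove (Qb t) 1 2 = 52*t := by
  rw [nAbove5 (78*t) (17*t) (32*t) (56*t) (76*t) (by omega) (by omega) (by omega) (by omega)
      wb vof1 vof2 vof3 vof4 (Qb t)
      (fun i => rfl) 1 2,
    show (if wb (1:Fin 4) < wb 2 then (1:ℕ) else 0) = 1 from by decide,
    show (if vof1 (1:Fin 4) < vof1 2 then (1:ℕ) else 0) = 1 from by decide,
    show (if vof2 (1:Fin 4) < vof2 2 then (1:ℕ) else 0) = 0 from by decide,
    show (if vof3 (1:Fin 4) < vof3 2 then (1:ℕ) else 0) = 1 from by decide,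
    show (if vof4 (1:Fin 4) < vof4 2 then (1:ℕ) else 0) = 0 from by decide]
  omega

lemma n_Qb_3_1 (t : ℕ) : nAbove (Qb t) 3 1 = 24*t := by
  rw [nAbove5 (78*t) (17*t) (32*t) (56*t) (76*t) (by omega) (by omega) (by omega) (by omega)
      wb vof1 vof2 vof3 vof4 (Qb t)
      (fun i => rfl) 3 1,
    show (if wb (3:Fin 4) < wb 1 then (1:ℕ) else 0) = 0 from by decide,
    show (if vof1 (3:Fin 4) < vof1 1 then (1:ℕ) else 0) = 0 from by decide,
    show (if vof2 (3:Fin 4) < vof2 1 then (1:ℕ) else 0) = 1 from by decide,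
    show (if vof3 (3:Fin 4) < vof3 1 then (1:ℕ) else 0) = 0 from by decide,
    show (if vof4 (3:Fin 4) < vof4 1 then (1:ℕ) else 0) = 0 from by decide]
  omega

lemma n_Qb_1_3 (t : ℕ) : nAbove (Qb t) 1 3 = 54*t := by
  rw [nAbove5 (78*t) (17*t) (32*t) (56*t) (76*t) (by omega) (by omega) (by omega) (by omega)
      wb vof1 vof2 vof3 vof4 (Qb t)
      (fun i => rfl) 1 3,
    show (if wb (1:Fin 4) < wb 3 then (1:ℕ) else 0) = 1 from by decide,
    show (if vof1 (1:Fin 4) < vof1 3 then (1:ℕ) else 0) = 1 from by decide,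
    show (if vof2 (1:Fin 4) < vof2 3 then (1:ℕ) else 0) = 0 from by decide,
    show (if vof3 (1:Fin 4) < vof3 3 then (1:ℕ) else 0) = 1 from by decide,
    show (if vof4 (1:Fin 4) < vof4 3 then (1:ℕ) else 0) = 1 from by decide]
  omega

lemma n_Qc_0_2 (t : ℕ) : nAbove (Qc t) 0 2 = 32*t := by
  rw [nAbove5 (78*t) (13*t) (32*t) (56*t) (76*t) (by omega) (by omega) (by omega) (by omega)
      wc vof1 vof2 vof3 vof4 (Qc t)
      (fun i => rfl) 0 2,
    show (if wc (0:Fin 4) < wc 2 then (1:ℕ) else 0) = 1 from by decide,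
    show (if vof1 (0:Fin 4) < vof1 2 then (1:ℕ) else 0) = 1 from by decide,
    show (if vof2 (0:Fin 4) < vof2 2 then (1:ℕ) else 0) = 0 from by decide,
    show (if vof3 (0:Fin 4) < vof3 2 then (1:ℕ) else 0) = 0 from by decide,
    show (if vof4 (0:Fin 4) < vof4 2 then (1:ℕ) else 0) = 0 from by decide]
  omega

lemma n_Qc_2_0 (t : ℕ) : nAbove (Qc t) 2 0 = 46*t := by
  rw [nAbove5 (78*t) (13*t) (32*t) (56*t) (76*t) (by omega) (by omega) (by omega) (by omega)
      wc vof1 vof2 vof3 vof4 (Qc t)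
      (fun i => rfl) 2 0,
    show (if wc (2:Fin 4) < wc 0 then (1:ℕ) else 0) = 0 from by decide,
    show (if vof1 (2:Fin 4) < vof1 0 then (1:ℕ) else 0) = 0 from by decide,
    show (if vof2 (2:Fin 4) < vof2 0 then (1:ℕ) else 0) = 1 from by decide,
    show (if vof3 (2:Fin 4) < vof3 0 then (1:ℕ) else 0) = 1 from by decide,
    show (if vof4 (2:Fin 4) < vof4 0 then (1:ℕ) else 0) = 1 from by decide]
  omega

lemma n_Qc_1_2 (t : ℕ) : nAbove (Qc t) 1 2 = 39*t := by
  rw [nAbove5 (78*t) (13*t) (32*t) (56*t) (76*t) (by omega) (by omega) (by omega) (by omega)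
      wc vof1 vof2 vof3 vof4 (Qc t)
      (fun i => rfl) 1 2,
    show (if wc (1:Fin 4) < wc 2 then (1:ℕ) else 0) = 0 from by decide,
    show (if vof1 (1:Fin 4) < vof1 2 then (1:ℕ) else 0) = 1 from by decide,
    show (if vof2 (1:Fin 4) < vof2 2 then (1:ℕ) else 0) = 0 from by decide,
    show (if vof3 (1:Fin 4) < vof3 2 then (1:ℕ) else 0) = 1 from by decide,
    show (if vof4 (1:Fin 4) < vof4 2 then (1:ℕ) else 0) = 0 from by decide]
  omega

lemma n_Qc_2_1 (t : ℕ) : nAbove (Qc t) 2 1 = 39*t := by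
  rw [nAbove5 (78*t) (13*t) (32*t) (56*t) (76*t) (by omega) (by omega) (by omega) (by omega)
      wc vof1 vof2 vof3 vof4 (Qc t)
      (fun i => rfl) 2 1,
    show (if wc (2:Fin 4) < wc 1 then (1:ℕ) else 0) = 1 from by decide,
    show (if vof1 (2:Fin 4) < vof1 1 then (1:ℕ) else 0) = 0 from by decide,
    show (if vof2 (2:Fin 4) < vof2 1 then (1:ℕ) else 0) = 1 from by decide,
    show (if vof3 (2:Fin 4) < vof3 1 then (1:ℕ) else 0) = 0 from by decide,
    show (if vof4 (2:Fin 4) < vof4 1 then (1:ℕ) else 0) = 1 from by decide]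
  omega

lemma n_Qc_3_2 (t : ℕ) : nAbove (Qc t) 3 2 = 0*t := by
  rw [nAbove5 (78*t) (13*t) (32*t) (56*t) (76*t) (by omega) (by omega) (by omega) (by omega)
      wc vof1 vof2 vof3 vof4 (Qc t)
      (fun i => rfl) 3 2,
    show (if wc (3:Fin 4) < wc 2 then (1:ℕ) else 0) = 0 from by decide,
    show (if vof1 (3:Fin 4) < vof1 2 then (1:ℕ) else 0) = 0 from by decide,
    show (if vof2 (3:Fin 4) < vof2 2 then (1:ℕ) else 0) = 0 from by decide,
    show (if vof3 (3:Fin 4) < vof3 2 then (1:ℕ) else 0) = 0 from by decide,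
    show (if vof4 (3:Fin 4) < vof4 2 then (1:ℕ) else 0) = 0 from by decide]
  omega

lemma n_Qc_2_3 (t : ℕ) : nAbove (Qc t) 2 3 = 78*t := by
  rw [nAbove5 (78*t) (13*t) (32*t) (56*t) (76*t) (by omega) (by omega) (by omega) (by omega)
      wc vof1 vof2 vof3 vof4 (Qc t)
      (fun i => rfl) 2 3,
    show (if wc (2:Fin 4) < wc 3 then (1:ℕ) else 0) = 1 from by decide,
    show (if vof1 (2:Fin 4) < vof1 3 then (1:ℕ) else 0) = 1 from by decide,
    show (if vof2 (2:Fin 4) < vof2 3 then (1:ℕ) else 0) = 1 from by decide,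
    show (if vof3 (2:Fin 4) < vof3 3 then (1:ℕ) else 0) = 1 from by decide,
    show (if vof4 (2:Fin 4) < vof4 3 then (1:ℕ) else 0) = 1 from by decide]
  omega

lemma n_Qx_0_3 (t : ℕ) : nAbove (Qx t) 0 3 = 34*t := by
  rw [nAbove5 (78*t) (32*t) (56*t) (71*t) (76*t) (by omega) (by omega) (by omega) (by omega)
      vof1 wx2 wx3 vof3 vof4 (Qx t)
      (fun i => rfl) 0 3,
    show (if vof1 (0:Fin 4) < vof1 3 then (1:ℕ) else 0) = 1 from by decide,
    show (if wx2 (0:Fin 4) < wx2 3 then (1:ℕ) else 0) = 0 from by decide,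
    show (if wx3 (0:Fin 4) < wx3 3 then (1:ℕ) else 0) = 0 from by decide,
    show (if vof3 (0:Fin 4) < vof3 3 then (1:ℕ) else 0) = 0 from by decide,
    show (if vof4 (0:Fin 4) < vof4 3 then (1:ℕ) else 0) = 1 from by decide]
  omega

lemma n_Qx_3_0 (t : ℕ) : nAbove (Qx t) 3 0 = 44*t := by
  rw [nAbove5 (78*t) (32*t) (56*t) (71*t) (76*t) (by omega) (by omega) (by omega) (by omega)
      vof1 wx2 wx3 vof3 vof4 (Qx t)
      (fun i => rfl) 3 0,
    show (if vof1 (3:Fin 4) < vof1 0 then (1:ℕ) else 0) = 0 from by decide,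
    show (if wx2 (3:Fin 4) < wx2 0 then (1:ℕ) else 0) = 1 from by decide,
    show (if wx3 (3:Fin 4) < wx3 0 then (1:ℕ) else 0) = 1 from by decide,
    show (if vof3 (3:Fin 4) < vof3 0 then (1:ℕ) else 0) = 1 from by decide,
    show (if vof4 (3:Fin 4) < vof4 0 then (1:ℕ) else 0) = 0 from by decide]
  omega

lemma n_Qx_1_3 (t : ℕ) : nAbove (Qx t) 1 3 = 39*t := by
  rw [nAbove5 (78*t) (32*t) (56*t) (71*t) (76*t) (by omega) (by omega) (by omega) (by omega)
      vof1 wx2 wx3 vof3 vof4 (Qx t)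
      (fun i => rfl) 1 3,
    show (if vof1 (1:Fin 4) < vof1 3 then (1:ℕ) else 0) = 1 from by decide,
    show (if wx2 (1:Fin 4) < wx2 3 then (1:ℕ) else 0) = 0 from by decide,
    show (if wx3 (1:Fin 4) < wx3 3 then (1:ℕ) else 0) = 0 from by decide,
    show (if vof3 (1:Fin 4) < vof3 3 then (1:ℕ) else 0) = 1 from by decide,
    show (if vof4 (1:Fin 4) < vof4 3 then (1:ℕ) else 0) = 1 from by decide]
  omega

lemma n_Qx_3_1 (t : ℕ) : nAbove (Qx t) 3 1 = 39*t := by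
  rw [nAbove5 (78*t) (32*t) (56*t) (71*t) (76*t) (by omega) (by omega) (by omega) (by omega)
      vof1 wx2 wx3 vof3 vof4 (Qx t)
      (fun i => rfl) 3 1,
    show (if vof1 (3:Fin 4) < vof1 1 then (1:ℕ) else 0) = 0 from by decide,
    show (if wx2 (3:Fin 4) < wx2 1 then (1:ℕ) else 0) = 1 from by decide,
    show (if wx3 (3:Fin 4) < wx3 1 then (1:ℕ) else 0) = 1 from by decide,
    show (if vof3 (3:Fin 4) < vof3 1 then (1:ℕ) else 0) = 0 from by decide,
    show (if vof4 (3:Fin 4) < vof4 1 then (1:ℕ) else 0) = 0 from by decide]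
  omega

lemma n_Qx_2_3 (t : ℕ) : nAbove (Qx t) 2 3 = 39*t := by
  rw [nAbove5 (78*t) (32*t) (56*t) (71*t) (76*t) (by omega) (by omega) (by omega) (by omega)
      vof1 wx2 wx3 vof3 vof4 (Qx t)
      (fun i => rfl) 2 3,
    show (if vof1 (2:Fin 4) < vof1 3 then (1:ℕ) else 0) = 1 from by decide,
    show (if wx2 (2:Fin 4) < wx2 3 then (1:ℕ) else 0) = 0 from by decide,
    show (if wx3 (2:Fin 4) < wx3 3 then (1:ℕ) else 0) = 0 from by decide,
    show (if vof3 (2:Fin 4) < vof3 3 then (1:ℕ) else 0) = 1 from by decide,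
    show (if vof4 (2:Fin 4) < vof4 3 then (1:ℕ) else 0) = 1 from by decide]
  omega

lemma n_Qx_3_2 (t : ℕ) : nAbove (Qx t) 3 2 = 39*t := by
  rw [nAbove5 (78*t) (32*t) (56*t) (71*t) (76*t) (by omega) (by omega) (by omega) (by omega)
      vof1 wx2 wx3 vof3 vof4 (Qx t)
      (fun i => rfl) 3 2,
    show (if vof1 (3:Fin 4) < vof1 2 then (1:ℕ) else 0) = 0 from by decide,
    show (if wx2 (3:Fin 4) < wx2 2 then (1:ℕ) else 0) = 1 from by decide,
    show (if wx3 (3:Fin 4) < wx3 2 then (1:ℕ) else 0) = 1 from by decide,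
    show (if vof3 (3:Fin 4) < vof3 2 then (1:ℕ) else 0) = 0 from by decide,
    show (if vof4 (3:Fin 4) < vof4 2 then (1:ℕ) else 0) = 0 from by decide]
  omega

lemma adv_Pt_0_1 (t : ℕ) : adv (Pt t) 0 1 = 34*t := by
  unfold adv; rw [n_Pt_0_1, n_Pt_1_0]; omega

lemma adv_Pt_0_2 (t : ℕ) : adv (Pt t) 0 2 = 0*t := by
  unfold adv; rw [n_Pt_0_2, n_Pt_2_0]; omega

lemma adv_Pt_0_3 (t : ℕ) : adv (Pt t) 0 3 = 0*t := by
  unfold adv; rw [n_Pt_0_3, n_Pt_3_0]; omega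

lemma adv_Pt_1_0 (t : ℕ) : adv (Pt t) 1 0 = 0*t := by
  unfold adv; rw [n_Pt_1_0, n_Pt_0_1]; omega

lemma adv_Pt_1_2 (t : ℕ) : adv (Pt t) 1 2 = 26*t := by
  unfold adv; rw [n_Pt_1_2, n_Pt_2_1]; omega

lemma adv_Pt_1_3 (t : ℕ) : adv (Pt t) 1 3 = 30*t := by
  unfold adv; rw [n_Pt_1_3, n_Pt_3_1]; omega

lemma adv_Pt_2_0 (t : ℕ) : adv (Pt t) 2 0 = 14*t := by
  unfold adv; rw [n_Pt_2_0, n_Pt_0_2]; omega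

lemma adv_Pt_2_1 (t : ℕ) : adv (Pt t) 2 1 = 0*t := by
  unfold adv; rw [n_Pt_2_1, n_Pt_1_2]; omega

lemma adv_Pt_2_3 (t : ℕ) : adv (Pt t) 2 3 = 78*t := by
  unfold adv; rw [n_Pt_2_3, n_Pt_3_2]; omega

lemma adv_Pt_3_0 (t : ℕ) : adv (Pt t) 3 0 = 10*t := by
  unfold adv; rw [n_Pt_3_0, n_Pt_0_3]; omega

lemma adv_Pt_3_1 (t : ℕ) : adv (Pt t) 3 1 = 0*t := by
  unfold adv; rw [n_Pt_3_1, n_Pt_1_3]; omega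

lemma adv_Pt_3_2 (t : ℕ) : adv (Pt t) 3 2 = 0*t := by
  unfold adv; rw [n_Pt_3_2, n_Pt_2_3]; omega

/- ### ScQ values -/

lemma filter_ne (a : Fin 4) :
    (Finset.univ.filter (fun b : Fin 4 => b ≠ a)) =
      if a = 0 then {1,2,3} else if a = 1 then {0,2,3} else if a = 2 then {0,1,3} else {0,1,2} := by
  fin_cases a <;> decide

lemma ScQ_Pt_0 (t : ℕ) : ScQ (Pt t) 0 = 12*t := by
  unfold ScQ
  rw [show (Finset.univ.filter (fun b : Fin 4 => b ≠ 0)) = {1,2,3} from by decide,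
    Finset.sum_insert (by decide), Finset.sum_insert (by decide), Finset.sum_singleton,
    adv_Pt_1_0, adv_Pt_2_0, adv_Pt_3_0]
  omega

lemma ScQ_Pt_1 (t : ℕ) : ScQ (Pt t) 1 = 17*t := by
  unfold ScQ
  rw [show (Finset.univ.filter (fun b : Fin 4 => b ≠ 1)) = {0,2,3} from by decide,
    Finset.sum_insert (by decide), Finset.sum_insert (by decide), Finset.sum_singleton,
    adv_Pt_0_1, adv_Pt_2_1, adv_Pt_3_1]
  omega

lemma ScQ_Pt_2 (t : ℕ) : ScQ (Pt t) 2 = 13*t := by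
  unfold ScQ
  rw [show (Finset.univ.filter (fun b : Fin 4 => b ≠ 2)) = {0,1,3} from by decide,
    Finset.sum_insert (by decide), Finset.sum_insert (by decide), Finset.sum_singleton,
    adv_Pt_0_2, adv_Pt_1_2, adv_Pt_3_2]
  omega

lemma ScQ_Pt_3 (t : ℕ) : ScQ (Pt t) 3 = 54*t := by
  unfold ScQ
  rw [show (Finset.univ.filter (fun b : Fin 4 => b ≠ 3)) = {0,1,2} from by decide,
    Finset.sum_insert (by decide), Finset.sum_insert (by decide), Finset.sum_singleton,
    adv_Pt_0_3, adv_Pt_1_3, adv_Pt_2_3]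
  omega

/- ### Condorcet-tie winners of the modified profiles -/

lemma fin4cases : ∀ b : Fin 4, b = 0 ∨ b = 1 ∨ b = 2 ∨ b = 3 := by decide

lemma tie_Qa (t : ℕ) : CondorcetTieWinner (Qa t) 0 := by
  intro b hb
  rcases fin4cases b with h | h | h | h <;> subst h
  · exact absurd rfl hb
  · unfold adv; rw [n_Qa_1_0, n_Qa_0_1]; omega
  · unfold adv; rw [n_Qa_2_0, n_Qa_0_2]; omega
  · unfold adv; rw [n_Qa_3_0, n_Qa_0_3]; omega

lemma tie_Qb (t : ℕ) : CondorcetTieWinner (Qb t) 1 := by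
  intro b hb
  rcases fin4cases b with h | h | h | h <;> subst h
  · unfold adv; rw [n_Qb_0_1, n_Qb_1_0]; omega
  · exact absurd rfl hb
  · unfold adv; rw [n_Qb_2_1, n_Qb_1_2]; omega
  · unfold adv; rw [n_Qb_3_1, n_Qb_1_3]; omega

lemma tie_Qc (t : ℕ) : CondorcetTieWinner (Qc t) 2 := by
  intro b hb
  rcases fin4cases b with h | h | h | h <;> subst h
  · unfold adv; rw [n_Qc_0_2, n_Qc_2_0]; omega
  · unfold adv; rw [n_Qc_1_2, n_Qc_2_1]; omega
  · exact absurd rfl hb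
  · unfold adv; rw [n_Qc_3_2, n_Qc_2_3]; omega

lemma tie_Qx (t : ℕ) : CondorcetTieWinner (Qx t) 3 := by
  intro b hb
  rcases fin4cases b with h | h | h | h <;> subst h
  · unfold adv; rw [n_Qx_0_3, n_Qx_3_0]; omega
  · unfold adv; rw [n_Qx_1_3, n_Qx_3_1]; omega
  · unfold adv; rw [n_Qx_2_3, n_Qx_3_2]; omega
  · exact absurd rfl hb

/- ### Reach: upper bounds -/

lemma reach0 (v : Vote 4) : Reach AdjSwapVote 0 v v := rfl

lemma reach1_wb : Reach AdjSwapVote 1 vof1 wb := ⟨wb, ⟨0, 1, by decide, rfl⟩, rfl⟩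
lemma reach1_wc : Reach AdjSwapVote 1 vof1 wc := ⟨wc, ⟨1, 2, by decide, rfl⟩, rfl⟩
lemma reach1_wx2 : Reach AdjSwapVote 1 vof2 wx2 := ⟨wx2, ⟨0, 1, by decide, rfl⟩, rfl⟩
lemma reach2_wa : Reach AdjSwapVote 2 vof2 wa :=
  ⟨wa', ⟨1, 2, by decide, rfl⟩, wa, ⟨0, 1, by decide, rfl⟩, rfl⟩
lemma reach2_wx3 : Reach AdjSwapVote 2 vof3 wx3 :=
  ⟨wx3', ⟨1, 2, by decide, rfl⟩, wx3, ⟨0, 1, by decide, rfl⟩, rfl⟩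

lemma reach_votes {n : ℕ} : ∀ (N : ℕ) (P Q : Profile 4 n) (k : Fin n → ℕ),
    (∑ i, k i) = N → (∀ i, Reach AdjSwapVote (k i) (P i) (Q i)) → Reach AdjSwap N P Q := by
  intro N
  induction N with
  | zero =>
    intro P Q k hs hv
    have hz : ∀ i, k i = 0 := by
      intro i
      have := Finset.sum_eq_zero_iff.mp hs i (Finset.mem_univ i)
      exact this
    have : P = Q := funext fun i => by
      have := hv i; rw [hz i] at this; exact this
    exact this
  | succ N ih =>
    intro P Q k hs hv
    have hex : ∃ i, k i ≠ 0 := by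
      by_contra h
      push_neg at h
      rw [Finset.sum_eq_zero (fun i _ => h i)] at hs
      omega
    obtain ⟨i, hi⟩ := hex
    obtain ⟨m, hm⟩ := Nat.exists_eq_succ_of_ne_zero hi
    have hvi := hv i
    rw [hm] at hvi
    obtain ⟨w, hsw, hrest⟩ := hvi
    refine ⟨Function.update P i w, ⟨i, ?_, fun j hj => Function.update_of_ne hj _ _⟩, ?_⟩
    · rw [Function.update_self]; exact hsw
    · apply ih (Function.update P i w) Q (Function.update k i m)
      · have h1 := Finset.sum_update_of_mem (Finset.mem_univ i) k m
        rw [Finset.sdiff_singleton_eq_erase] at h1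
        have h2 := Finset.add_sum_erase Finset.univ k (Finset.mem_univ i)
        omega
      · intro j
        by_cases hj : j = i
        · subst hj; rw [Function.update_self, Function.update_self]; exact hrest
        · rw [Function.update_of_ne hj, Function.update_of_ne hj]; exact hv j

def ka (t : ℕ) : Fin (78*t) → ℕ := fun i =>
  if (i:ℕ) < 32*t then 0 else if (i:ℕ) < 39*t then 2
  else if (i:ℕ) < 56*t then 0 else if (i:ℕ) < 76*t then 0 else 0
def kb (t : ℕ) : Fin (78*t) → ℕ := fun i =>
  if (i:ℕ) < 17*t then 1 else if (i:ℕ) < 32*t then 0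
  else if (i:ℕ) < 56*t then 0 else if (i:ℕ) < 76*t then 0 else 0
def kc (t : ℕ) : Fin (78*t) → ℕ := fun i =>
  if (i:ℕ) < 13*t then 1 else if (i:ℕ) < 32*t then 0
  else if (i:ℕ) < 56*t then 0 else if (i:ℕ) < 76*t then 0 else 0
def kx (t : ℕ) : Fin (78*t) → ℕ := fun i =>
  if (i:ℕ) < 32*t then 0 else if (i:ℕ) < 56*t then 1
  else if (i:ℕ) < 71*t then 2 else if (i:ℕ) < 76*t then 0 else 0

lemma reach_Qa (t : ℕ) : Reach AdjSwap (14*t) (Pt t) (Qa t) := by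
  apply reach_votes (14*t) (Pt t) (Qa t) (ka t)
  · rw [sum5 (78*t) (32*t) (39*t) (56*t) (76*t) (by omega) (by omega) (by omega) (by omega)
      (ka t) 0 2 0 0 0 (fun i => rfl)]
    omega
  · intro i
    rcases Nat.lt_or_ge (i:ℕ) (32*t) with h1 | h1
    · have e1 : Pt t i = vof1 := by simp only [Pt]; rw [if_pos h1]
      have e2 : Qa t i = vof1 := by simp only [Qa]; rw [if_pos h1]
      have e3 : ka t i = 0 := by simp only [ka]; rw [if_pos h1]
      rw [e1, e2, e3]; exact reach0 _
    rcases Nat.lt_or_ge (i:ℕ) (39*t) with h2 | h2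
    · have e1 : Pt t i = vof2 := by
        simp only [Pt]; rw [if_neg (by omega), if_pos (by omega)]
      have e2 : Qa t i = wa := by simp only [Qa]; rw [if_neg (by omega), if_pos h2]
      have e3 : ka t i = 2 := by simp only [ka]; rw [if_neg (by omega), if_pos h2]
      rw [e1, e2, e3]; exact reach2_wa
    rcases Nat.lt_or_ge (i:ℕ) (56*t) with h3 | h3
    · have e1 : Pt t i = vof2 := by simp only [Pt]; rw [if_neg (by omega), if_pos h3]
      have e2 : Qa t i = vof2 := by
        simp only [Qa]; rw [if_neg (by omega), if_neg (by omega), if_pos h3]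
      have e3 : ka t i = 0 := by
        simp only [ka]; rw [if_neg (by omega), if_neg (by omega), if_pos h3]
      rw [e1, e2, e3]; exact reach0 _
    rcases Nat.lt_or_ge (i:ℕ) (76*t) with h4 | h4
    · have e1 : Pt t i = vof3 := by
        simp only [Pt]; rw [if_neg (by omega), if_neg (by omega), if_pos h4]
      have e2 : Qa t i = vof3 := by
        simp only [Qa]; rw [if_neg (by omega), if_neg (by omega), if_neg (by omega), if_pos h4]
      have e3 : ka t i = 0 := by
        simp only [ka]
        rw [if_neg (by omega), if_neg (by omega), if_neg (by omega), if_pos h4]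
      rw [e1, e2, e3]; exact reach0 _
    · have e1 : Pt t i = vof4 := by
        simp only [Pt]; rw [if_neg (by omega), if_neg (by omega), if_neg (by omega)]
      have e2 : Qa t i = vof4 := by
        simp only [Qa]
        rw [if_neg (by omega), if_neg (by omega), if_neg (by omega), if_neg (by omega)]
      have e3 : ka t i = 0 := by
        simp only [ka]
        rw [if_neg (by omega), if_neg (by omega), if_neg (by omega), if_neg (by omega)]
      rw [e1, e2, e3]; exact reach0 _

lemma reach_Qb (t : ℕ) : Reach AdjSwap (17*t) (Pt t) (Qb t) := by
  apply reach_votes (17*t) (Pt t) (Qb t) (kb t)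
  · rw [sum5 (78*t) (17*t) (32*t) (56*t) (76*t) (by omega) (by omega) (by omega) (by omega)
      (kb t) 1 0 0 0 0 (fun i => rfl)]
    omega
  · intro i
    rcases Nat.lt_or_ge (i:ℕ) (17*t) with h0 | h0
    · have e1 : Pt t i = vof1 := by simp only [Pt]; rw [if_pos (by omega)]
      have e2 : Qb t i = wb := by simp only [Qb]; rw [if_pos (by omega)]
      have e3 : kb t i = 1 := by simp only [kb]; rw [if_pos (by omega)]
      rw [e1, e2, e3]; exact reach1_wb
    rcases Nat.lt_or_ge (i:ℕ) (32*t) with h1 | h1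
    · have e1 : Pt t i = vof1 := by simp only [Pt]; rw [if_pos (by omega)]
      have e2 : Qb t i = vof1 := by simp only [Qb]; rw [if_neg (by omega), if_pos (by omega)]
      have e3 : kb t i = 0 := by simp only [kb]; rw [if_neg (by omega), if_pos (by omega)]
      rw [e1, e2, e3]; exact reach0 _
    rcases Nat.lt_or_ge (i:ℕ) (56*t) with h2 | h2
    · have e1 : Pt t i = vof2 := by simp only [Pt]; rw [if_neg (by omega), if_pos (by omega)]
      have e2 : Qb t i = vof2 := by simp only [Qb]; rw [if_neg (by omega), if_neg (by omega), if_pos (by omega)]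
      have e3 : kb t i = 0 := by simp only [kb]; rw [if_neg (by omega), if_neg (by omega), if_pos (by omega)]
      rw [e1, e2, e3]; exact reach0 _
    rcases Nat.lt_or_ge (i:ℕ) (76*t) with h3 | h3
    · have e1 : Pt t i = vof3 := by simp only [Pt]; rw [if_neg (by omega), if_neg (by omega), if_pos (by omega)]
      have e2 : Qb t i = vof3 := by simp only [Qb]; rw [if_neg (by omega), if_neg (by omega), if_neg (by omega), if_pos (by omega)]
      have e3 : kb t i = 0 := by simp only [kb]; rw [if_neg (by omega), if_neg (by omega), if_neg (by omega), if_pos (by omega)]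
      rw [e1, e2, e3]; exact reach0 _
    · have e1 : Pt t i = vof4 := by simp only [Pt]; rw [if_neg (by omega), if_neg (by omega), if_neg (by omega)]
      have e2 : Qb t i = vof4 := by simp only [Qb]; rw [if_neg (by omega), if_neg (by omega), if_neg (by omega), if_neg (by omega)]
      have e3 : kb t i = 0 := by simp only [kb]; rw [if_neg (by omega), if_neg (by omega), if_neg (by omega), if_neg (by omega)]
      rw [e1, e2, e3]; exact reach0 _

lemma reach_Qc (t : ℕ) : Reach AdjSwap (13*t) (Pt t) (Qc t) := by
  apply reach_votes (13*t) (Pt t) (Qc t) (kc t)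
  · rw [sum5 (78*t) (13*t) (32*t) (56*t) (76*t) (by omega) (by omega) (by omega) (by omega)
      (kc t) 1 0 0 0 0 (fun i => rfl)]
    omega
  · intro i
    rcases Nat.lt_or_ge (i:ℕ) (13*t) with h0 | h0
    · have e1 : Pt t i = vof1 := by simp only [Pt]; rw [if_pos (by omega)]
      have e2 : Qc t i = wc := by simp only [Qc]; rw [if_pos (by omega)]
      have e3 : kc t i = 1 := by simp only [kc]; rw [if_pos (by omega)]
      rw [e1, e2, e3]; exact reach1_wc
    rcases Nat.lt_or_ge (i:ℕ) (32*t) with h1 | h1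
    · have e1 : Pt t i = vof1 := by simp only [Pt]; rw [if_pos (by omega)]
      have e2 : Qc t i = vof1 := by simp only [Qc]; rw [if_neg (by omega), if_pos (by omega)]
      have e3 : kc t i = 0 := by simp only [kc]; rw [if_neg (by omega), if_pos (by omega)]
      rw [e1, e2, e3]; exact reach0 _
    rcases Nat.lt_or_ge (i:ℕ) (56*t) with h2 | h2
    · have e1 : Pt t i = vof2 := by simp only [Pt]; rw [if_neg (by omega), if_pos (by omega)]
      have e2 : Qc t i = vof2 := by simp only [Qc]; rw [if_neg (by omega), if_neg (by omega), if_pos (by omega)]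
      have e3 : kc t i = 0 := by simp only [kc]; rw [if_neg (by omega), if_neg (by omega), if_pos (by omega)]
      rw [e1, e2, e3]; exact reach0 _
    rcases Nat.lt_or_ge (i:ℕ) (76*t) with h3 | h3
    · have e1 : Pt t i = vof3 := by simp only [Pt]; rw [if_neg (by omega), if_neg (by omega), if_pos (by omega)]
      have e2 : Qc t i = vof3 := by simp only [Qc]; rw [if_neg (by omega), if_neg (by omega), if_neg (by omega), if_pos (by omega)]
      have e3 : kc t i = 0 := by simp only [kc]; rw [if_neg (by omega), if_neg (by omega), if_neg (by omega), if_pos (by omega)]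
      rw [e1, e2, e3]; exact reach0 _
    · have e1 : Pt t i = vof4 := by simp only [Pt]; rw [if_neg (by omega), if_neg (by omega), if_neg (by omega)]
      have e2 : Qc t i = vof4 := by simp only [Qc]; rw [if_neg (by omega), if_neg (by omega), if_neg (by omega), if_neg (by omega)]
      have e3 : kc t i = 0 := by simp only [kc]; rw [if_neg (by omega), if_neg (by omega), if_neg (by omega), if_neg (by omega)]
      rw [e1, e2, e3]; exact reach0 _

lemma reach_Qx (t : ℕ) : Reach AdjSwap (54*t) (Pt t) (Qx t) := by
  apply reach_votes (54*t) (Pt t) (Qx t) (kx t)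
  · rw [sum5 (78*t) (32*t) (56*t) (71*t) (76*t) (by omega) (by omega) (by omega) (by omega)
      (kx t) 0 1 2 0 0 (fun i => rfl)]
    omega
  · intro i
    rcases Nat.lt_or_ge (i:ℕ) (32*t) with h0 | h0
    · have e1 : Pt t i = vof1 := by simp only [Pt]; rw [if_pos (by omega)]
      have e2 : Qx t i = vof1 := by simp only [Qx]; rw [if_pos (by omega)]
      have e3 : kx t i = 0 := by simp only [kx]; rw [if_pos (by omega)]
      rw [e1, e2, e3]; exact reach0 _
    rcases Nat.lt_or_ge (i:ℕ) (56*t) with h1 | h1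
    · have e1 : Pt t i = vof2 := by simp only [Pt]; rw [if_neg (by omega), if_pos (by omega)]
      have e2 : Qx t i = wx2 := by simp only [Qx]; rw [if_neg (by omega), if_pos (by omega)]
      have e3 : kx t i = 1 := by simp only [kx]; rw [if_neg (by omega), if_pos (by omega)]
      rw [e1, e2, e3]; exact reach1_wx2
    rcases Nat.lt_or_ge (i:ℕ) (71*t) with h2 | h2
    · have e1 : Pt t i = vof3 := by simp only [Pt]; rw [if_neg (by omega), if_neg (by omega), if_pos (by omega)]
      have e2 : Qx t i = wx3 := by simp only [Qx]; rw [if_neg (by omega), if_neg (by omega), if_pos (by omega)]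
      have e3 : kx t i = 2 := by simp only [kx]; rw [if_neg (by omega), if_neg (by omega), if_pos (by omega)]
      rw [e1, e2, e3]; exact reach2_wx3
    rcases Nat.lt_or_ge (i:ℕ) (76*t) with h3 | h3
    · have e1 : Pt t i = vof3 := by simp only [Pt]; rw [if_neg (by omega), if_neg (by omega), if_pos (by omega)]
      have e2 : Qx t i = vof3 := by simp only [Qx]; rw [if_neg (by omega), if_neg (by omega), if_neg (by omega), if_pos (by omega)]
      have e3 : kx t i = 0 := by simp only [kx]; rw [if_neg (by omega), if_neg (by omega), if_neg (by omega), if_pos (by omega)]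
      rw [e1, e2, e3]; exact reach0 _
    · have e1 : Pt t i = vof4 := by simp only [Pt]; rw [if_neg (by omega), if_neg (by omega), if_neg (by omega)]
      have e2 : Qx t i = vof4 := by simp only [Qx]; rw [if_neg (by omega), if_neg (by omega), if_neg (by omega), if_neg (by omega)]
      have e3 : kx t i = 0 := by simp only [kx]; rw [if_neg (by omega), if_neg (by omega), if_neg (by omega), if_neg (by omega)]
      rw [e1, e2, e3]; exact reach0 _

/- ### Lower bounds: Kendall distance machinery -/

/-- Number of (ordered) discordant pairs between two votes. -/
def Dk (v w : Vote 4) : ℕ :=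
  (Finset.univ.filter (fun p : Fin 4 × Fin 4 => v p.1 < v p.2 ∧ w p.2 < w p.1)).card

lemma Dk_self (v : Vote 4) : Dk v v = 0 := by
  unfold Dk
  rw [Finset.card_eq_zero, Finset.filter_eq_empty_iff]
  rintro p _ ⟨h1, h2⟩
  exact absurd h1 (lt_asymm h2)

instance (v w : Vote 4) : Decidable (AdjSwapVote v w) := by
  unfold AdjSwapVote; infer_instance

lemma Dk_swap : ∀ v w : Vote 4, AdjSwapVote v w → Dk v w ≤ 1 := by decide

lemma Dk_tri : ∀ u v w : Vote 4, Dk u w ≤ Dk u v + Dk v w := by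
  intro u v w
  unfold Dk
  refine le_trans (Finset.card_le_card ?_) (Finset.card_union_le _ _)
  rintro p hp
  rw [Finset.mem_filter] at hp
  obtain ⟨-, h1, h2⟩ := hp
  have hne : v p.1 ≠ v p.2 := fun h => by
    rw [v.injective h] at h1; exact lt_irrefl _ h1
  rcases lt_or_gt_of_ne hne with hv | hv
  · exact Finset.mem_union_right _ (Finset.mem_filter.mpr ⟨Finset.mem_univ _, hv, h2⟩)
  · exact Finset.mem_union_left _ (Finset.mem_filter.mpr ⟨Finset.mem_univ _, h1, hv⟩)

lemma reach_ge {n : ℕ} : ∀ (k : ℕ) (P Q : Profile 4 n),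
    Reach AdjSwap k P Q → ∑ i, Dk (P i) (Q i) ≤ k := by
  intro k
  induction k with
  | zero =>
    intro P Q h
    cases h
    simp [Dk_self]
  | succ k ih =>
    intro P Q h
    obtain ⟨R, ⟨j, hsw, hoth⟩, hR⟩ := h
    have tri : ∑ i, Dk (P i) (Q i) ≤ (∑ i, Dk (P i) (R i)) + ∑ i, Dk (R i) (Q i) := by
      rw [← Finset.sum_add_distrib]
      exact Finset.sum_le_sum (fun i _ => Dk_tri _ _ _)
    have h1 : ∑ i, Dk (P i) (R i) ≤ 1 := by
      rw [Finset.sum_eq_single j (fun i _ hij => by rw [hoth i hij, Dk_self])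
        (fun h => absurd (Finset.mem_univ j) h)]
      exact Dk_swap _ _ hsw
    have h2 := ih R Q hR
    omega

/-- Number of votes whose (x,y) comparison has been flipped from `x` above `y`. -/
def Fl {n : ℕ} (P Q : Profile 4 n) (x y : Fin 4) : ℕ :=
  (Finset.univ.filter (fun i => P i x < P i y ∧ Q i y < Q i x)).card

lemma Fl_le_sum {n : ℕ} (P Q : Profile 4 n) (x y : Fin 4) :
    Fl P Q x y ≤ ∑ i, Dk (P i) (Q i) := by
  rw [Fl, Finset.card_filter]
  refine Finset.sum_le_sum (fun i _ => ?_)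
  split_ifs with h
  · rw [Nat.succ_le, Dk, Finset.card_pos]
    exact ⟨(x, y), Finset.mem_filter.mpr ⟨Finset.mem_univ _, h⟩⟩
  · exact Nat.zero_le _

lemma Fl_two_le_sum {n : ℕ} (P Q : Profile 4 n) :
    Fl P Q 1 3 + Fl P Q 2 3 ≤ ∑ i, Dk (P i) (Q i) := by
  rw [Fl, Fl, Finset.card_filter, Finset.card_filter, ← Finset.sum_add_distrib]
  refine Finset.sum_le_sum (fun i _ => ?_)
  split_ifs with h1 h2 h2
  · show 2 ≤ Dk (P i) (Q i)
    have hsub : {((1:Fin 4), (3:Fin 4)), ((2:Fin 4), (3:Fin 4))} ⊆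
        Finset.univ.filter (fun p : Fin 4 × Fin 4 => P i p.1 < P i p.2 ∧ Q i p.2 < Q i p.1) := by
      intro p hp
      rcases Finset.mem_insert.mp hp with h | h
      · subst h; exact Finset.mem_filter.mpr ⟨Finset.mem_univ _, h1⟩
      · rw [Finset.mem_singleton] at h; subst h
        exact Finset.mem_filter.mpr ⟨Finset.mem_univ _, h2⟩
    calc 2 = ({((1:Fin 4), (3:Fin 4)), ((2:Fin 4), (3:Fin 4))} : Finset (Fin 4 × Fin 4)).card := by decide
    _ ≤ _ := Finset.card_le_card hsub
  · show 1 ≤ Dk (P i) (Q i)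
    rw [Nat.succ_le, Dk, Finset.card_pos]
    exact ⟨(1, 3), Finset.mem_filter.mpr ⟨Finset.mem_univ _, h1⟩⟩
  · show 1 ≤ Dk (P i) (Q i)
    rw [Nat.succ_le, Dk, Finset.card_pos]
    exact ⟨(2, 3), Finset.mem_filter.mpr ⟨Finset.mem_univ _, h2⟩⟩
  · exact Nat.zero_le _

lemma Dk_key : ∀ v w : Vote 4, (v = vof1 ∨ v = vof2 ∨ v = vof3 ∨ v = vof4) →
    (v 2 < v 0 ∧ w 0 < w 2) → 2 ≤ Dk v w := by decide

lemma Fl_a_le_sum {t : ℕ} (Q : Profile 4 (78*t)) :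
    2 * Fl (Pt t) Q 2 0 ≤ ∑ i, Dk (Pt t i) (Q i) := by
  rw [Fl, Finset.card_filter, Finset.mul_sum]
  refine Finset.sum_le_sum (fun i _ => ?_)
  have hv : Pt t i = vof1 ∨ Pt t i = vof2 ∨ Pt t i = vof3 ∨ Pt t i = vof4 := by
    simp only [Pt]; split_ifs <;> tauto
  split_ifs with h
  · simpa using Dk_key _ _ hv h
  · simp

lemma flip1 {n : ℕ} (P Q : Profile 4 n) (x y : Fin 4) :
    nAbove P x y ≤ nAbove Q x y + Fl P Q x y := by
  rw [nAbove, nAbove, Fl]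
  refine le_trans (Finset.card_le_card ?_) (Finset.card_union_le _ _)
  intro i hi
  rw [Finset.mem_filter] at hi
  obtain ⟨-, h⟩ := hi
  have hne : Q i x ≠ Q i y := fun he => by
    rw [(Q i).injective he] at h; exact lt_irrefl _ h
  rcases lt_or_gt_of_ne hne with hq | hq
  · exact Finset.mem_union_left _ (Finset.mem_filter.mpr ⟨Finset.mem_univ _, hq⟩)
  · exact Finset.mem_union_right _ (Finset.mem_filter.mpr ⟨Finset.mem_univ _, h, hq⟩)

lemma flip2 {n : ℕ} (P Q : Profile 4 n) (x y : Fin 4) :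
    nAbove Q y x ≤ nAbove P y x + Fl P Q x y := by
  rw [nAbove, nAbove, Fl]
  refine le_trans (Finset.card_le_card ?_) (Finset.card_union_le _ _)
  intro i hi
  rw [Finset.mem_filter] at hi
  obtain ⟨-, h⟩ := hi
  have hne : P i y ≠ P i x := fun he => by
    rw [(P i).injective he] at h; exact lt_irrefl _ h
  rcases lt_or_gt_of_ne hne with hp | hp
  · exact Finset.mem_union_left _ (Finset.mem_filter.mpr ⟨Finset.mem_univ _, hp⟩)
  · exact Finset.mem_union_right _ (Finset.mem_filter.mpr ⟨Finset.mem_univ _, hp, h⟩)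

lemma tie_le {n : ℕ} {Q : Profile 4 n} {a : Fin 4} (h : CondorcetTieWinner Q a)
    (b : Fin 4) (hb : b ≠ a) : nAbove Q b a ≤ nAbove Q a b :=
  Nat.sub_eq_zero_iff_le.mp (h b hb)

/- ### The Dodgson scores -/

lemma ScD_Pt_0 (t : ℕ) : ScD (Pt t) 0 = 14*t := by
  have hmem : 14*t ∈ {k | ∃ Q, Reach AdjSwap k (Pt t) Q ∧ CondorcetTieWinner Q 0} :=
    ⟨Qa t, reach_Qa t, tie_Qa t⟩
  refine le_antisymm (Nat.sInf_le hmem) (le_csInf ⟨_, hmem⟩ ?_)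
  rintro k ⟨Q, hr, htie⟩
  have hsum := reach_ge k (Pt t) Q hr
  have hF := Fl_a_le_sum Q
  have h1 := flip1 (Pt t) Q 2 0
  have h2 := flip2 (Pt t) Q 2 0
  have h3 := tie_le htie 2 (by decide)
  rw [n_Pt_2_0] at h1
  rw [n_Pt_0_2] at h2
  omega

lemma ScD_Pt_1 (t : ℕ) : ScD (Pt t) 1 = 17*t := by
  have hmem : 17*t ∈ {k | ∃ Q, Reach AdjSwap k (Pt t) Q ∧ CondorcetTieWinner Q 1} :=
    ⟨Qb t, reach_Qb t, tie_Qb t⟩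
  refine le_antisymm (Nat.sInf_le hmem) (le_csInf ⟨_, hmem⟩ ?_)
  rintro k ⟨Q, hr, htie⟩
  have hsum := reach_ge k (Pt t) Q hr
  have hF := Fl_le_sum (Pt t) Q 0 1
  have h1 := flip1 (Pt t) Q 0 1
  have h2 := flip2 (Pt t) Q 0 1
  have h3 := tie_le htie 0 (by decide)
  rw [n_Pt_0_1] at h1
  rw [n_Pt_1_0] at h2
  omega

lemma ScD_Pt_2 (t : ℕ) : ScD (Pt t) 2 = 13*t := by
  have hmem : 13*t ∈ {k | ∃ Q, Reach AdjSwap k (Pt t) Q ∧ CondorcetTieWinner Q 2} :=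
    ⟨Qc t, reach_Qc t, tie_Qc t⟩
  refine le_antisymm (Nat.sInf_le hmem) (le_csInf ⟨_, hmem⟩ ?_)
  rintro k ⟨Q, hr, htie⟩
  have hsum := reach_ge k (Pt t) Q hr
  have hF := Fl_le_sum (Pt t) Q 1 2
  have h1 := flip1 (Pt t) Q 1 2
  have h2 := flip2 (Pt t) Q 1 2
  have h3 := tie_le htie 1 (by decide)
  rw [n_Pt_1_2] at h1
  rw [n_Pt_2_1] at h2
  omega

lemma ScD_Pt_3 (t : ℕ) : ScD (Pt t) 3 = 54*t := by
  have hmem : 54*t ∈ {k | ∃ Q, Reach AdjSwap k (Pt t) Q ∧ CondorcetTieWinner Q 3} :=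
    ⟨Qx t, reach_Qx t, tie_Qx t⟩
  refine le_antisymm (Nat.sInf_le hmem) (le_csInf ⟨_, hmem⟩ ?_)
  rintro k ⟨Q, hr, htie⟩
  have hsum := reach_ge k (Pt t) Q hr
  have hF := Fl_two_le_sum (Pt t) Q
  have h1 := flip1 (Pt t) Q 1 3
  have h2 := flip2 (Pt t) Q 1 3
  have h3 := tie_le htie 1 (by decide)
  have h4 := flip1 (Pt t) Q 2 3
  have h5 := flip2 (Pt t) Q 2 3
  have h6 := tie_le htie 2 (by decide)
  rw [n_Pt_1_3] at h1
  rw [n_Pt_3_1] at h2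
  rw [n_Pt_2_3] at h4
  rw [n_Pt_3_2] at h5
  omega

/-- In `P_t`, the DQ scores of `a,b,c,x` are `12t, 17t, 13t, 54t` and the Dodgson
scores are `14t, 17t, 13t, 54t`; hence `a = 0` is the unique DQ winner while
`c = 2` is the unique Dodgson winner. -/
theorem stmt_14 (t : ℕ) (ht : 1 ≤ t) :
    ScQ (Pt t) 0 = 12 * t ∧ ScQ (Pt t) 1 = 17 * t ∧
    ScQ (Pt t) 2 = 13 * t ∧ ScQ (Pt t) 3 = 54 * t ∧
    ScD (Pt t) 0 = 14 * t ∧ ScD (Pt t) 1 = 17 * t ∧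
    ScD (Pt t) 2 = 13 * t ∧ ScD (Pt t) 3 = 54 * t ∧
    (∀ y : Fin 4, y ≠ 0 → ScQ (Pt t) 0 < ScQ (Pt t) y) ∧
    (∀ y : Fin 4, y ≠ 2 → ScD (Pt t) 2 < ScD (Pt t) y) := by
  refine ⟨ScQ_Pt_0 t, ScQ_Pt_1 t, ScQ_Pt_2 t, ScQ_Pt_3 t,
    ScD_Pt_0 t, ScD_Pt_1 t, ScD_Pt_2 t, ScD_Pt_3 t, ?_, ?_⟩
  · intro y hy
    rcases fin4cases y with h | h | h | h <;> subst h
    · exact absurd rfl hy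
    · rw [ScQ_Pt_0, ScQ_Pt_1]; omega
    · rw [ScQ_Pt_0, ScQ_Pt_2]; omega
    · rw [ScQ_Pt_0, ScQ_Pt_3]; omega
  · intro y hy
    rcases fin4cases y with h | h | h | h <;> subst h
    · rw [ScD_Pt_2, ScD_Pt_0]; omega
    · rw [ScD_Pt_2, ScD_Pt_1]; omega
    · exact absurd rfl hy
    · rw [ScD_Pt_2, ScD_Pt_3]; omega
end
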